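/- arXiv:2311.10515 — 7 statements merged into one kernel-verified Lean document; each statement's English description precedes it below -/
import Mathlib

section
/- Let k be a field of characteristic 0 with algebraic closure C, let A be a finite-dimensional commutative k-algebra, and let h ∈ A. Define the Hermite bilinear form associated with h by H_h(f,g) = trace of the k-linear multiplication map L_{fhg} : A → A. Then the rank of H_h equals the number of prime ideals of the localization of C ⊗_k A away from the element 1 ⊗ h (equivalently, the number of maximal ideals of C ⊗_k A not containing 1 ⊗ h). -/
/-!
Rank is invariant under extension of scalars, and the Hermite form of `1 ⊗ h` on `C ⊗[k] A` is the
base change of that of `h`, so we may work over the algebraically closed field `C`.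

Over an algebraically closed field `K` of characteristic zero, the characters `φ : B →ₐ[K] K` of a
finite-dimensional algebra `B` correspond to its primes via `φ ↦ ker φ`, and the kernel of
`B → K^{Hom(B, K)}` is nil. Lifting the standard idempotents of `K^{Hom(B, K)}` gives idempotents
`e φ` with `tr z = ∑ φ, tr (e φ) * φ z`, since `(z - φ z) * e φ` is nilpotent; and
`tr (e φ) ≠ 0`, being the rank of the projection `e φ ≠ 0`. Hence
`H_h f = ∑ φ, (tr (e φ) * φ h * φ f) • φ`, whose range is spanned by the linearly independent
characters with `φ h ≠ 0`.
-/

open scoped TensorProduct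
open Module

section BaseChange

variable {k C : Type*} [Field k] [Field C] [Algebra k C]

theorem LinearMap.finrank_range_baseChange {V W : Type*} [AddCommGroup V] [Module k V]
    [AddCommGroup W] [Module k W] [FiniteDimensional k W] (f : V →ₗ[k] W) :
    finrank C (range (f.baseChange C)) = finrank k (range f) := by
  set p := range f
  have hexact : Function.Exact (f.baseChange C) (p.mkQ.baseChange C) :=
    lTensor_exact C (exact_map_mkQ_range f) (Submodule.mkQ_surjective p)
  have hsurj : Function.Surjective (p.mkQ.baseChange C) :=
    lTensor_surjective C (Submodule.mkQ_surjective p)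
  have hC := finrank_range_add_finrank_ker (p.mkQ.baseChange C)
  rw [range_eq_top.mpr hsurj, finrank_top, hexact.linearMap_ker_eq, finrank_baseChange,
    finrank_baseChange] at hC
  have hk := Submodule.finrank_quotient_add_finrank p
  omega

theorem Matrix.rank_map_algebraMap {m n : Type*} [Fintype m] [Fintype n] [DecidableEq n]
    (M : Matrix m n k) : (M.map (algebraMap k C)).rank = M.rank := by
  let f := Matrix.toLin (Pi.basisFun k n) (Pi.basisFun k m) M
  let bn := Algebra.TensorProduct.basis C (Pi.basisFun k n)
  let bm := Algebra.TensorProduct.basis C (Pi.basisFun k m)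
  have hM : M.map (algebraMap k C) = LinearMap.toMatrix bn bm (f.baseChange C) := by
    rw [LinearMap.toMatrix_baseChange, LinearMap.toMatrix_toLin]
  rw [hM, Matrix.rank_eq_finrank_range_toLin _ bm bn, Matrix.toLin_toMatrix,
    LinearMap.finrank_range_baseChange,
    Matrix.rank_eq_finrank_range_toLin M (Pi.basisFun k m) (Pi.basisFun k n)]

theorem LinearMap.BilinForm.finrank_range_baseChange {V : Type*} [AddCommGroup V] [Module k V]
    [FiniteDimensional k V] (β : LinearMap.BilinForm k V) :
    finrank C (range (β.baseChange C)) = finrank k (range β) := by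
  let b := finBasis k V
  let bC := Algebra.TensorProduct.basis C b
  have hM : LinearMap.toMatrix bC bC.dualBasis (β.baseChange C) =
      (LinearMap.toMatrix b b.dualBasis β).map (algebraMap k C) := by
    ext i j
    simp [LinearMap.toMatrix_apply, bC, Algebra.algebraMap_eq_smul_one]
  rw [← Matrix.toLin_toMatrix bC bC.dualBasis (β.baseChange C),
    ← Matrix.rank_eq_finrank_range_toLin, hM, Matrix.rank_map_algebraMap,
    Matrix.rank_eq_finrank_range_toLin _ b.dualBasis b, Matrix.toLin_toMatrix]

end BaseChange

namespace Algebra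

noncomputable def hermiteForm (R : Type*) {A : Type*} [CommRing R] [CommRing A] [Algebra R A]
    (h : A) : LinearMap.BilinForm R A :=
  (traceForm R A).compl₂ (LinearMap.mulLeft R h)

theorem hermiteForm_apply {R A : Type*} [CommRing R] [CommRing A] [Algebra R A] (h f g : A) :
    hermiteForm R h f g = trace R A (f * (h * g)) :=
  rfl

variable {k C A : Type*} [CommRing k] [CommRing C] [Algebra k C] [CommRing A] [Algebra k A]
  [Module.Free k A] [Module.Finite k A]

theorem trace_one_tmul (a : A) :
    trace C (C ⊗[k] A) (1 ⊗ₜ a) = algebraMap k C (trace k A a) := by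
  rw [trace_apply, ← baseChange_lmul, LinearMap.trace_baseChange]
  rfl

theorem hermiteForm_baseChange (h : A) :
    hermiteForm C ((1 : C) ⊗ₜ[k] h) = (hermiteForm k h).baseChange C := by
  ext f g
  simp [hermiteForm_apply, trace_one_tmul, algebraMap_eq_smul_one]

end Algebra

namespace AlgHom

theorem eq_of_ker_eq {R A : Type*} [CommRing R] [Ring A] [Algebra R A] {φ ψ : A →ₐ[R] R}
    (h : RingHom.ker φ = RingHom.ker ψ) : φ = ψ := by
  ext z
  have hz : z - algebraMap R A (φ z) ∈ RingHom.ker ψ := by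
    rw [← h, RingHom.mem_ker, map_sub, commutes, Algebra.algebraMap_self, RingHom.id_apply,
      sub_self]
  rwa [RingHom.mem_ker, map_sub, commutes, Algebra.algebraMap_self, RingHom.id_apply,
    sub_eq_zero, eq_comm] at hz

theorem ker_isMaximal {K B : Type*} [Field K] [Ring B] [Algebra K B] (φ : B →ₐ[K] K) :
    (RingHom.ker φ).IsMaximal :=
  RingHom.ker_isMaximal_of_surjective φ fun c ↦ ⟨algebraMap K B c, φ.commutes c⟩

end AlgHom

section Characters

variable {K B : Type*} [Field K] [CommRing B] [Algebra K B]

theorem exists_algHom_ker_eq_of_isMaximal [IsAlgClosed K] [Algebra.IsIntegral K B]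
    (m : Ideal B) [m.IsMaximal] : ∃ φ : B →ₐ[K] K, RingHom.ker φ = m := by
  let := Ideal.Quotient.field m
  let ψ : K ≃ₐ[K] B ⧸ m := AlgEquiv.ofBijective (Algebra.ofId K (B ⧸ m))
    IsAlgClosed.algebraMap_bijective_of_isIntegral
  refine ⟨(ψ.symm : B ⧸ m →ₐ[K] K).comp (Ideal.Quotient.mkₐ K m), ?_⟩
  ext z
  simp [Ideal.Quotient.eq_zero_iff_mem]

variable (K B) in
noncomputable def algHomEquivPrimeSpectrum [IsAlgClosed K] [FiniteDimensional K B] :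
    (B →ₐ[K] K) ≃ PrimeSpectrum B :=
  Equiv.ofBijective (fun φ ↦ ⟨RingHom.ker φ, RingHom.ker_isPrime _⟩) <| by
    refine ⟨fun φ ψ h ↦ AlgHom.eq_of_ker_eq (congrArg PrimeSpectrum.asIdeal h), fun p ↦ ?_⟩
    have := IsArtinianRing.of_finite K B
    have : p.asIdeal.IsMaximal := (IsArtinianRing.isPrime_iff_isMaximal _).mp p.isPrime
    obtain ⟨φ, hφ⟩ := exists_algHom_ker_eq_of_isMaximal (K := K) p.asIdeal
    exact ⟨φ, PrimeSpectrum.ext hφ⟩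

@[simp]
theorem algHomEquivPrimeSpectrum_asIdeal [IsAlgClosed K] [FiniteDimensional K B]
    (φ : B →ₐ[K] K) : (algHomEquivPrimeSpectrum K B φ).asIdeal = RingHom.ker φ :=
  rfl

theorem isNilpotent_of_forall_algHom_apply_eq_zero [IsAlgClosed K] [FiniteDimensional K B]
    {z : B} (hz : ∀ φ : B →ₐ[K] K, φ z = 0) : IsNilpotent z := by
  rw [nilpotent_iff_mem_prime]
  intro p hp
  obtain ⟨φ, hφ⟩ := (algHomEquivPrimeSpectrum K B).surjective ⟨p, hp⟩
  have hker : RingHom.ker φ = p := congrArg PrimeSpectrum.asIdeal hφ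
  exact hker ▸ hz φ

theorem exists_forall_algHom_apply_eq [FiniteDimensional K B] (y : (B →ₐ[K] K) → K) :
    ∃ z : B, ∀ φ : B →ₐ[K] K, φ z = y φ := by
  have hcop : Pairwise fun φ ψ : B →ₐ[K] K ↦ IsCoprime (RingHom.ker φ) (RingHom.ker ψ) :=
    fun φ ψ hne ↦ Ideal.isCoprime_iff_sup_eq.mpr <|
      Ideal.IsMaximal.coprime_of_ne (AlgHom.ker_isMaximal φ) (AlgHom.ker_isMaximal ψ)
        (mt AlgHom.eq_of_ker_eq hne)
  obtain ⟨x, hx⟩ := Ideal.quotientInfToPiQuotient_surj hcop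
    fun φ ↦ Ideal.Quotient.mk _ (algebraMap K B (y φ))
  obtain ⟨z, rfl⟩ := Ideal.Quotient.mk_surjective x
  refine ⟨z, fun φ ↦ ?_⟩
  have hzφ := congrFun hx φ
  rwa [Ideal.quotientInfToPiQuotient_mk', Ideal.Quotient.eq, RingHom.mem_ker, map_sub,
    AlgHom.commutes, Algebra.algebraMap_self, RingHom.id_apply, sub_eq_zero] at hzφ

theorem exists_completeOrthogonalIdempotents_algHom [IsAlgClosed K] [FiniteDimensional K B]
    [Fintype (B →ₐ[K] K)] :
    ∃ e : (B →ₐ[K] K) → B, CompleteOrthogonalIdempotents e ∧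
      (∀ φ : B →ₐ[K] K, φ (e φ) = 1) ∧ ∀ φ ψ : B →ₐ[K] K, φ ≠ ψ → φ (e ψ) = 0 := by
  classical
  let ev : B →+* ((B →ₐ[K] K) → K) := RingHom.pi fun φ ↦ φ
  have hker : ∀ z ∈ RingHom.ker ev, IsNilpotent z := fun z hz ↦
    isNilpotent_of_forall_algHom_apply_eq_zero fun φ ↦ congrFun hz φ
  obtain ⟨e, he, hev⟩ := CompleteOrthogonalIdempotents.lift_of_isNilpotent_ker ev hker
    (CompleteOrthogonalIdempotents.single fun _ ↦ K) fun ψ ↦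
      (exists_forall_algHom_apply_eq _).imp fun z hz ↦ funext hz
  have hevφ (φ ψ : B →ₐ[K] K) : φ (e ψ) = Pi.single (M := fun _ ↦ K) ψ 1 φ :=
    congrFun (congrFun hev ψ) φ
  exact ⟨e, he, fun φ ↦ by simp [hevφ], fun φ ψ hne ↦ by simp [hevφ, hne]⟩

theorem Algebra.trace_ne_zero_of_isIdempotentElem [CharZero K] [FiniteDimensional K B] {e : B}
    (he : IsIdempotentElem e) (hne : e ≠ 0) : Algebra.trace K B e ≠ 0 := by
  intro h0
  rw [Algebra.trace_apply,
    LinearMap.IsIdempotentElem.trace_eq_zero_iff (he.map (Algebra.lmul K B))] at h0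
  exact hne (by simpa using congr($h0 1))

theorem Algebra.trace_eq_sum_algHom [IsAlgClosed K] [FiniteDimensional K B] [Fintype (B →ₐ[K] K)]
    {e : (B →ₐ[K] K) → B} (he : CompleteOrthogonalIdempotents e)
    (he₀ : ∀ φ ψ : B →ₐ[K] K, φ ≠ ψ → φ (e ψ) = 0) (z : B) :
    Algebra.trace K B z = ∑ φ, Algebra.trace K B (e φ) * φ z := by
  have hnil (φ : B →ₐ[K] K) : IsNilpotent ((z - algebraMap K B (φ z)) * e φ) :=
    isNilpotent_of_forall_algHom_apply_eq_zero fun ψ ↦ by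
      by_cases hψ : ψ = φ
      · subst hψ; simp
      · simp [he₀ ψ φ hψ]
  calc Algebra.trace K B z = Algebra.trace K B (∑ φ, z * e φ) := by
        rw [← Finset.mul_sum, he.complete, mul_one]
    _ = ∑ φ, Algebra.trace K B (φ z • e φ + (z - algebraMap K B (φ z)) * e φ) := by
        rw [map_sum]
        refine Finset.sum_congr rfl fun φ _ ↦ ?_
        rw [Algebra.smul_def]
        congr 1
        ring
    _ = ∑ φ, Algebra.trace K B (e φ) * φ z := by
        refine Finset.sum_congr rfl fun φ _ ↦ ?_
        rw [map_add, map_smul, (Algebra.isNilpotent_trace_of_isNilpotent (hnil φ)).eq_zero,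
          add_zero, smul_eq_mul, mul_comm]

theorem Algebra.range_hermiteForm_eq_span [IsAlgClosed K] [CharZero K] [FiniteDimensional K B]
    (h : B) : LinearMap.range (Algebra.hermiteForm K h) =
      Submodule.span K (Set.range fun φ : {φ : B →ₐ[K] K // φ h ≠ 0} ↦ (φ.1 : B →ₗ[K] K)) := by
  have := Fintype.ofFinite (B →ₐ[K] K)
  obtain ⟨e, he, he₁, he₀⟩ := exists_completeOrthogonalIdempotents_algHom (K := K) (B := B)
  have hform (f : B) : Algebra.hermiteForm K h f =
      ∑ φ, (Algebra.trace K B (e φ) * φ h * φ f) • (φ : B →ₗ[K] K) := by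
    ext g
    rw [Algebra.hermiteForm_apply, Algebra.trace_eq_sum_algHom he he₀, LinearMap.sum_apply]
    refine Finset.sum_congr rfl fun φ _ ↦ ?_
    simp only [map_mul, LinearMap.smul_apply, LinearMap.coe_coe, smul_eq_mul]
    ring
  apply le_antisymm
  · rintro _ ⟨f, rfl⟩
    rw [hform]
    refine Submodule.sum_mem _ fun φ _ ↦ ?_
    by_cases hφ : φ h = 0
    · simp [hφ]
    · exact Submodule.smul_mem _ _ (Submodule.subset_span ⟨⟨φ, hφ⟩, rfl⟩)
  · rw [Submodule.span_le]
    rintro _ ⟨⟨φ, hφ⟩, rfl⟩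
    have heφ : e φ ≠ 0 := fun h0 ↦ by simpa [h0] using he₁ φ
    have hc : Algebra.trace K B (e φ) * φ h ≠ 0 :=
      mul_ne_zero (Algebra.trace_ne_zero_of_isIdempotentElem (he.idem φ) heφ) hφ
    refine ⟨(Algebra.trace K B (e φ) * φ h)⁻¹ • e φ, ?_⟩
    rw [map_smul, hform, Finset.sum_eq_single φ]
    · rw [he₁, mul_one, smul_smul, inv_mul_cancel₀ hc, one_smul]
    · intro ψ _ hψ
      simp [he₀ ψ φ hψ]
    · simp

theorem Algebra.finrank_range_hermiteForm_eq_card [IsAlgClosed K] [CharZero K]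
    [FiniteDimensional K B] (h : B) :
    finrank K (LinearMap.range (Algebra.hermiteForm K h)) =
      Nat.card {p : PrimeSpectrum B // h ∉ p.asIdeal} := by
  classical
  have := Fintype.ofFinite (B →ₐ[K] K)
  have hli : LinearIndependent K fun φ : {φ : B →ₐ[K] K // φ h ≠ 0} ↦ (φ.1 : B →ₗ[K] K) :=
    (linearIndependent_algHom_toLinearMap K B K).comp _ Subtype.val_injective
  rw [Algebra.range_hermiteForm_eq_span, finrank_span_eq_card hli, ← Nat.card_eq_fintype_card]
  exact Nat.card_congr <| (algHomEquivPrimeSpectrum K B).subtypeEquiv fun φ ↦ by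
    simp [RingHom.mem_ker]

end Characters

theorem PrimeSpectrum.card_of_isLocalization_away {R : Type*} (S : Type*) [CommRing R]
    [CommRing S] [Algebra R S] (r : R) [IsLocalization.Away r S] :
    Nat.card (PrimeSpectrum S) = Nat.card {p : PrimeSpectrum R // r ∉ p.asIdeal} :=
  Nat.card_congr <| (Equiv.ofInjective _ (localization_away_isOpenEmbedding S r).injective).trans
    (Equiv.setCongr (localization_away_comap_range S r))

/-- **Multivariate Hermite quadratic form associated with an element, rank part.**
Let `k` be a field of characteristic 0 with algebraic closure `C`, `A` a finite-dimensional
commutative `k`-algebra and `h ∈ A`.  The Hermite bilinear form associated with `h`,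
`H_h (f, g) = tr (L_{f h g})`, has rank equal to the number of prime ideals of the
localization of `C ⊗[k] A` away from `1 ⊗ h`. -/
theorem hermite_rank_assoc_eq_card_primeSpectrum_away
    (k : Type*) [Field k] [CharZero k]
    (A : Type*) [CommRing A] [Algebra k A] [FiniteDimensional k A] (h : A) :
    Module.finrank k
        (LinearMap.range ((Algebra.traceForm k A).compl₂ (LinearMap.mulLeft k h))) =
      Nat.card (PrimeSpectrum
        (Localization.Away ((1 : AlgebraicClosure k) ⊗ₜ[k] h))) := by
  change finrank k (LinearMap.range (Algebra.hermiteForm k h)) = _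
  rw [PrimeSpectrum.card_of_isLocalization_away _ ((1 : AlgebraicClosure k) ⊗ₜ[k] h),
    ← Algebra.finrank_range_hermiteForm_eq_card (K := AlgebraicClosure k),
    Algebra.hermiteForm_baseChange, LinearMap.BilinForm.finrank_range_baseChange]
end

section
/- Let A be a finite-dimensional commutative ℝ-algebra, h ∈ A, and let b be a basis of A as an ℝ-vector space. Let M be the Gram matrix with respect to b of the bilinear form H_h(f,g) = trace of the multiplication map L_{fhg}. Then M is a symmetric real matrix, and its signature, i.e. (number of positive eigenvalues of M, with multiplicity) − (number of negative eigenvalues of M, with multiplicity), equals #{φ : ℝ-algebra homomorphisms A → ℝ with φ(h) > 0} − #{φ : ℝ-algebra homomorphisms A → ℝ with φ(h) < 0}. In particular, for h = 1 the signature of the trace form of A over ℝ equals the number of ℝ-algebra homomorphisms A → ℝ. -/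
/-!
Both sides are additive over the factors of `A ⧸ nilradical A ≅ ∏ 𝔪, A ⧸ 𝔪`, whose residue fields
are `ℝ` or `ℂ`. The trace kills nilpotents, so the Hermite form of `A` is pulled back from a form on
`∏ 𝔪, A ⧸ 𝔪` along a surjection with a linear section, and Sylvester's law of inertia identifies
the two signatures. On the product the form is the orthogonal sum of the forms `t (x * (c * y))` on
the factors, where `t 1 > 0` because it is the trace of an idempotent lifted to `A`, i.e. a rank.
On a factor `ℝ` the signature is `sign c`, the sign of `h` at the unique real point of that factor;
on a factor `ℂ` there is an orthogonal basis `u, I * u` with opposite diagonal values, so the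
signature is `0`, matching the absence of real points. Finally, real points of `A` are exactly the
real points of its residue fields.
-/

open Module Finset SignType

theorem sum_sign_eq_card_pos_sub_card_neg {α 𝕜 : Type*} [Fintype α] [Field 𝕜] [LinearOrder 𝕜]
    [IsStrictOrderedRing 𝕜] (f : α → 𝕜) :
    ∑ a, (sign (f a) : ℤ) = #{a | 0 < f a} - #{a | f a < 0} := by
  simp only [card_filter, Nat.cast_sum, Nat.cast_ite, Nat.cast_one, Nat.cast_zero,
    ← sum_sub_distrib]
  refine sum_congr rfl fun a _ => ?_
  rcases lt_trichotomy (f a) 0 with h | h | h <;> simp [h, h.not_gt]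

namespace LinearMap.BilinForm

section Diagonal

variable {R M ι : Type*} [CommSemiring R] [AddCommMonoid M] [Module R M] [Fintype ι]

theorem apply_sum_smul_self_of_isOrthoᵢ {B : LinearMap.BilinForm R M} {v : ι → M}
    (hv : B.IsOrthoᵢ v) (c : ι → R) :
    B (∑ i, c i • v i) (∑ i, c i • v i) = ∑ i, c i * c i * B (v i) (v i) := by
  classical
  simp only [map_sum, map_smul, LinearMap.sum_apply, LinearMap.smul_apply, smul_eq_mul]
  refine sum_congr rfl fun i _ => ?_
  rw [sum_eq_single i (fun j _ hji => by rw [hv hji, mul_zero]) (by simp)]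
  ring

end Diagonal

variable {𝕜 V₁ V₂ ι κ : Type*} [Field 𝕜] [LinearOrder 𝕜] [IsStrictOrderedRing 𝕜]
  [AddCommGroup V₁] [Module 𝕜 V₁] [AddCommGroup V₂] [Module 𝕜 V₂] [Fintype ι] [Fintype κ]

theorem card_pos_le_of_isOrthoᵢ {B₁ : LinearMap.BilinForm 𝕜 V₁} {B₂ : LinearMap.BilinForm 𝕜 V₂}
    (f : V₁ →ₗ[𝕜] V₂) (hf : ∀ x, B₂ (f x) (f x) = B₁ x x) {v : ι → V₁} (hv : B₁.IsOrthoᵢ v)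
    (w : Basis κ 𝕜 V₂) (hw : B₂.IsOrthoᵢ w) :
    #{i | 0 < B₁ (v i) (v i)} ≤ #{j | 0 < B₂ (w j) (w j)} := by
  classical
  -- The `w`-coordinates at positive `w j` are injective on the span of the positive `v i`,
  -- since `B₂` is negative semidefinite on the span of the other `w j`.
  let S := {i // 0 < B₁ (v i) (v i)}
  let T := {j // 0 < B₂ (w j) (w j)}
  let F : (S → 𝕜) →ₗ[𝕜] (T → 𝕜) :=
    LinearMap.pi (fun j : T => w.coord j) ∘ₗ f ∘ₗ Fintype.linearCombination 𝕜 fun i : S => v i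
  have hF : Function.Injective F := by
    rw [← LinearMap.ker_eq_bot, LinearMap.ker_eq_bot']
    intro c hc
    set x := ∑ i : S, c i • v i
    have hx : B₁ x x = ∑ i : S, c i * c i * B₁ (v i) (v i) :=
      apply_sum_smul_self_of_isOrthoᵢ (hv.comp_of_injective Subtype.val_injective) c
    have hfx : B₂ (f x) (f x) = ∑ j, w.repr (f x) j * w.repr (f x) j * B₂ (w j) (w j) := by
      conv_lhs => rw [← w.sum_repr (f x)]
      exact apply_sum_smul_self_of_isOrthoᵢ hw _
    have hle : B₁ x x ≤ 0 := by
      rw [← hf, hfx]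
      refine sum_nonpos fun j _ => ?_
      by_cases hj : 0 < B₂ (w j) (w j)
      · have : w.repr (f x) j = 0 := by
          simpa [F, x, Fintype.linearCombination_apply, -map_sum] using funext_iff.mp hc ⟨j, hj⟩
        simp [this]
      · exact mul_nonpos_of_nonneg_of_nonpos (mul_self_nonneg _) (not_lt.mp hj)
    have hnonneg : ∀ i ∈ univ, 0 ≤ c i * c i * B₁ (v i) (v i) :=
      fun i _ => mul_nonneg (mul_self_nonneg _) i.2.le
    have hterm := (sum_eq_zero_iff_of_nonneg hnonneg).mp
      (le_antisymm (hx ▸ hle) (hx ▸ sum_nonneg hnonneg))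
    funext i
    simpa [i.2.ne'] using hterm i (mem_univ i)
  simpa [S, T, Fintype.card_subtype] using LinearMap.finrank_le_finrank_of_injective hF

/-- Sylvester's law of inertia. -/
theorem sum_sign_eq_of_isOrthoᵢ {B₁ : LinearMap.BilinForm 𝕜 V₁} {B₂ : LinearMap.BilinForm 𝕜 V₂}
    (f : V₁ →ₗ[𝕜] V₂) (g : V₂ →ₗ[𝕜] V₁) (hf : ∀ x, B₂ (f x) (f x) = B₁ x x)
    (hg : ∀ y, B₁ (g y) (g y) = B₂ y y) (v : Basis ι 𝕜 V₁) (hv : B₁.IsOrthoᵢ v)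
    (w : Basis κ 𝕜 V₂) (hw : B₂.IsOrthoᵢ w) :
    ∑ i, (sign (B₁ (v i) (v i)) : ℤ) = ∑ j, (sign (B₂ (w j) (w j)) : ℤ) := by
  have hv' : (-B₁).IsOrthoᵢ v := fun _ _ hij => neg_eq_zero.mpr (hv hij)
  have hw' : (-B₂).IsOrthoᵢ w := fun _ _ hij => neg_eq_zero.mpr (hw hij)
  have hpos := (card_pos_le_of_isOrthoᵢ f hf hv w hw).antisymm
    (card_pos_le_of_isOrthoᵢ g hg hw v hv)
  have hneg := (card_pos_le_of_isOrthoᵢ (B₂ := -B₂) f (by simp [hf]) hv' w hw').antisymm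
    (card_pos_le_of_isOrthoᵢ (B₂ := -B₁) g (by simp [hg]) hw' v hv')
  simp only [LinearMap.neg_apply, Left.neg_pos_iff] at hneg
  rw [sum_sign_eq_card_pos_sub_card_neg, sum_sign_eq_card_pos_sub_card_neg, hpos, hneg]

end LinearMap.BilinForm

theorem Matrix.IsHermitian.exists_basis_isOrthoᵢ_eigenvalues {V ι : Type*} [AddCommGroup V]
    [Module ℝ V] [Fintype ι] [DecidableEq ι] {B : LinearMap.BilinForm ℝ V} (b : Basis ι ℝ V)
    (hM : (LinearMap.BilinForm.toMatrix b B).IsHermitian) :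
    ∃ u : Basis ι ℝ V, B.IsOrthoᵢ u ∧ ∀ i, B (u i) (u i) = hM.eigenvalues i := by
  let e := hM.eigenvectorBasis
  let u := e.toBasis.map ((WithLp.linearEquiv 2 ℝ (ι → ℝ)).trans b.equivFun.symm)
  have hu : ∀ i j, B (u i) (u j) = hM.eigenvalues j * if i = j then 1 else 0 := by
    intro i j
    have hij := orthonormal_iff_ite.mp e.orthonormal i j
    rw [EuclideanSpace.inner_eq_star_dotProduct, star_trivial, dotProduct_comm] at hij
    have hui : ∀ k, u k = b.equivFun.symm (e k).ofLp := fun k => rfl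
    rw [← hij, ← smul_eq_mul, ← dotProduct_smul, ← hM.mulVec_eigenvectorBasis, hui, hui,
      LinearMap.BilinForm.dotProduct_toMatrix_mulVec]
  exact ⟨u, fun i j hij => by simp [Function.onFun, hu, hij], fun i => by simp [hu]⟩

section HermiteForm

variable {R S : Type*} [CommSemiring R] [CommSemiring S] [Algebra R S]

def hermiteForm (t : S →ₗ[R] R) (c : S) : LinearMap.BilinForm R S :=
  ((LinearMap.mul R S).compr₂ t).compl₂ (LinearMap.mulLeft R c)

@[simp]
theorem hermiteForm_apply (t : S →ₗ[R] R) (c x y : S) : hermiteForm t c x y = t (x * (c * y)) :=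
  rfl

theorem isSymm_hermiteForm (t : S →ₗ[R] R) (c : S) : (hermiteForm t c).IsSymm :=
  ⟨fun x y => by simp only [hermiteForm_apply]; ring_nf⟩

end HermiteForm

section Pi

variable {R ι : Type*} [CommSemiring R] [DecidableEq ι] {K : ι → Type*} [∀ i, CommSemiring (K i)]
  [∀ i, Algebra R (K i)] (t : (Π i, K i) →ₗ[R] R) (c : Π i, K i)

theorem hermiteForm_single_single (i : ι) (x y : K i) :
    hermiteForm t c (Pi.single i x) (Pi.single i y) =
      hermiteForm (t ∘ₗ LinearMap.single R K i) (c i) x y := by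
  simp [← Pi.single_mul_right]

theorem hermiteForm_single_single_of_ne {i j : ι} (hij : i ≠ j) (x : K i) (y : K j) :
    hermiteForm t c (Pi.single i x) (Pi.single j y) = 0 := by
  have : Pi.single i x * (c * Pi.single j y) = 0 := by
    ext k
    by_cases hk : k = i
    · subst hk; simp [hij]
    · simp [hk]
  simp [this]

theorem isOrthoᵢ_hermiteForm_piBasis [Fintype ι] {κ : ι → Type*} (v : ∀ i, Basis (κ i) R (K i))
    (hv : ∀ i, (hermiteForm (t ∘ₗ LinearMap.single R K i) (c i)).IsOrthoᵢ (v i)) :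
    (hermiteForm t c).IsOrthoᵢ (Pi.basis v) := by
  rintro ⟨i, k⟩ ⟨j, l⟩ hne
  simp only [Function.onFun, Pi.basis_apply]
  by_cases hij : i = j
  · subst hij
    rw [hermiteForm_single_single]
    exact hv i fun hkl => hne (by rw [hkl])
  · exact hermiteForm_single_single_of_ne t c hij _ _

end Pi

def HasHermiteSignatureBasis {K : Type*} [Field K] [Algebra ℝ K] [FiniteDimensional ℝ K]
    (t : K →ₗ[ℝ] ℝ) (c : K) : Prop :=
  ∃ (n : ℕ) (v : Basis (Fin n) ℝ K), (hermiteForm t c).IsOrthoᵢ v ∧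
    ∑ k, (sign (hermiteForm t c (v k) (v k)) : ℤ) = ∑ ψ : K →ₐ[ℝ] ℝ, (sign (ψ c) : ℤ)

theorem HasHermiteSignatureBasis.of_algEquiv {K L : Type*} [Field K] [Algebra ℝ K]
    [FiniteDimensional ℝ K] [Field L] [Algebra ℝ L] [FiniteDimensional ℝ L] (e : K ≃ₐ[ℝ] L)
    {t : K →ₗ[ℝ] ℝ} {c : K} (H : HasHermiteSignatureBasis (t ∘ₗ e.symm.toLinearMap) (e c)) :
    HasHermiteSignatureBasis t c := by
  obtain ⟨n, v, hv, hsum⟩ := H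
  have he : ∀ x y, hermiteForm (t ∘ₗ e.symm.toLinearMap) (e c) x y =
      hermiteForm t c (e.symm x) (e.symm y) := by
    simp
  refine ⟨n, v.map e.symm.toLinearEquiv, fun k l hkl => ?_, ?_⟩
  · simpa [Function.onFun, he] using hv hkl
  · rw [Fintype.sum_equiv (AlgEquiv.arrowCongr e AlgEquiv.refl) _ (fun ψ => (sign (ψ (e c)) : ℤ))
      (by simp)]
    simpa [he] using hsum

theorem Real.hasHermiteSignatureBasis {ℓ : ℝ →ₗ[ℝ] ℝ} (hℓ : 0 < ℓ 1) (c : ℝ) :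
    HasHermiteSignatureBasis ℓ c := by
  refine ⟨1, Basis.singleton (Fin 1) ℝ, fun k l hkl => absurd (Subsingleton.elim k l) hkl, ?_⟩
  have hc : ℓ c = c * ℓ 1 := by rw [← smul_eq_mul, ← map_smul, smul_eq_mul, mul_one]
  rw [Fintype.sum_subsingleton _ (AlgHom.id ℝ ℝ)]
  simp [hc, sign_mul, sign_pos hℓ]

instance Complex.isEmpty_algHom_real : IsEmpty (ℂ →ₐ[ℝ] ℝ) := by
  refine ⟨fun ψ => ?_⟩
  have : ψ I * ψ I = -1 := by rw [← map_mul, I_mul_I, map_neg, map_one]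
  nlinarith [mul_self_nonneg (ψ I)]

theorem Complex.hasHermiteSignatureBasis (ℓ : ℂ →ₗ[ℝ] ℝ) (c : ℂ) :
    HasHermiteSignatureBasis ℓ c := by
  -- Take `u ≠ 0` with `ℓ (I * c * u ^ 2) = 0`: then `u, u * I` is orthogonal, with opposite
  -- diagonal values.
  obtain ⟨z, hz, hz0⟩ := Submodule.exists_mem_ne_zero_of_ne_bot
    (LinearMap.ker_ne_bot_of_finrank_lt (f := ℓ ∘ₗ LinearMap.mulLeft ℝ (I * c))
      (by simp [Complex.finrank_real_complex]))
  obtain ⟨u, rfl⟩ := IsAlgClosed.exists_pow_nat_eq z two_pos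
  have hu : u ≠ 0 := by rintro rfl; simp at hz0
  let v := basisOneI.map (Units.mulLeftLinearEquiv ℝ ℂ (Units.mk0 u hu))
  have hv : ∀ k, v k = u * ![1, I] k := fun k => by simp [v]
  have h01 : ℓ (u * (c * (u * I))) = 0 := by
    rw [← hz]; simp only [LinearMap.comp_apply, LinearMap.mulLeft_apply]; ring_nf
  have h10 : ℓ (u * I * (c * u)) = 0 := by rw [← h01]; ring_nf
  have h11 : ℓ (u * I * (c * (u * I))) = -ℓ (u * (c * u)) := by
    rw [show u * I * (c * (u * I)) = u * (c * u) * (I * I) by ring, I_mul_I, mul_neg_one, map_neg]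
  refine ⟨2, v, fun k l hkl => ?_, ?_⟩
  · fin_cases k <;> fin_cases l <;> simp_all [Function.onFun]
  · simp [hv, h11, Left.sign_neg]

theorem hasHermiteSignatureBasis_of_finiteDimensional {K : Type*} [Field K] [Algebra ℝ K]
    [FiniteDimensional ℝ K] {t : K →ₗ[ℝ] ℝ} (ht : 0 < t 1) (c : K) :
    HasHermiteSignatureBasis t c := by
  rcases Real.nonempty_algEquiv_or K with ⟨⟨e⟩⟩ | ⟨⟨e⟩⟩
  · exact .of_algEquiv e (Real.hasHermiteSignatureBasis (by simpa using ht) _)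
  · exact .of_algEquiv e (Complex.hasHermiteSignatureBasis _ _)

theorem Algebra.trace_eq_of_isNilpotent_sub {R S : Type*} [CommRing R] [IsReduced R] [CommRing S]
    [Algebra R S] {a b : S} (h : IsNilpotent (a - b)) : trace R S a = trace R S b :=
  sub_eq_zero.mp (by simpa using (isNilpotent_trace_of_isNilpotent (R := R) h).eq_zero)

theorem Algebra.trace_pos_of_isIdempotentElem {K S : Type*} [Field K] [LinearOrder K]
    [IsStrictOrderedRing K] [CommRing S] [Algebra K S] [FiniteDimensional K S] {e : S}
    (he : IsIdempotentElem e) (he0 : e ≠ 0) : 0 < trace K S e := by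
  have hL : IsIdempotentElem (lmul K S e) := he.map (lmul K S)
  refine lt_of_le_of_ne ?_ (Ne.symm ?_)
  · rw [trace_apply, (LinearMap.IsIdempotentElem.isProj_range _ hL).trace]
    positivity
  · rw [trace_apply, Ne, LinearMap.IsIdempotentElem.trace_eq_zero_iff hL]
    exact fun h => he0 (by simpa using LinearMap.congr_fun h 1)

attribute [local instance] Ideal.Quotient.field

section MaximalSpectrum

variable (R : Type*) {A : Type*} [CommRing A]

def MaximalSpectrum.toPiQuotient [CommSemiring R] [Algebra R A] :
    A →ₐ[R] Π I : MaximalSpectrum A, A ⧸ I.asIdeal :=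
  AlgHom.pi fun I => Ideal.Quotient.mkₐ R I.asIdeal

theorem MaximalSpectrum.toPiQuotient_surjective [CommSemiring R] [Algebra R A]
    [Finite (MaximalSpectrum A)] : Function.Surjective (toPiQuotient R (A := A)) := fun q =>
  let ⟨a, ha⟩ := Ideal.pi_quotient_surjective (fun _ _ h => isCoprime_of_ne h) q
  ⟨a, funext ha⟩

theorem MaximalSpectrum.isNilpotent_of_toPiQuotient_eq_zero [CommSemiring R] [Algebra R A]
    [IsArtinianRing A] {a : A} (ha : toPiQuotient R a = 0) : IsNilpotent a := by
  rw [← mem_nilradical, IsArtinianRing.nilradical_eq_iInf, Ideal.mem_iInf]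
  exact fun I => Ideal.Quotient.eq_zero_iff_mem.mp (congr_fun ha I)

noncomputable def MaximalSpectrum.sigmaAlgHomEquiv [Field R] [Algebra R A] :
    (Σ I : MaximalSpectrum A, A ⧸ I.asIdeal →ₐ[R] R) ≃ (A →ₐ[R] R) :=
  Equiv.ofBijective (fun x => x.2.comp (Ideal.Quotient.mkₐ R x.1.asIdeal)) <| by
    constructor
    · rintro ⟨I, ψ⟩ ⟨J, ψ'⟩ h
      have hmem : ∀ a, a ∈ I.asIdeal ↔ a ∈ J.asIdeal := fun a => by
        rw [← Ideal.Quotient.eq_zero_iff_mem, ← map_eq_zero ψ, ← Ideal.Quotient.eq_zero_iff_mem,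
          ← map_eq_zero ψ']
        exact Eq.congr_left (DFunLike.congr_fun h a)
      obtain rfl : I = J := MaximalSpectrum.ext (Ideal.ext hmem)
      obtain rfl : ψ = ψ' := Ideal.Quotient.algHom_ext R h
      rfl
    · intro φ
      have hφ : Function.Surjective φ := fun r => ⟨algebraMap R A r, φ.commutes r⟩
      exact ⟨⟨⟨RingHom.ker φ, RingHom.ker_isMaximal_of_surjective φ hφ⟩,
        Ideal.Quotient.liftₐ _ φ fun _ ha => ha⟩, AlgHom.ext fun _ => rfl⟩

end MaximalSpectrum

section Assembly

open MaximalSpectrum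

variable {A : Type*} [CommRing A] [Algebra ℝ A] [FiniteDimensional ℝ A]

theorem trace_section_toPiQuotient {s : (Π I : MaximalSpectrum A, A ⧸ I.asIdeal) → A}
    (hs : ∀ q, toPiQuotient ℝ (s q) = q) (a : A) :
    Algebra.trace ℝ A (s (toPiQuotient ℝ a)) = Algebra.trace ℝ A a :=
  have : IsArtinianRing A := .of_finite ℝ A
  Algebra.trace_eq_of_isNilpotent_sub (isNilpotent_of_toPiQuotient_eq_zero ℝ (by simp [hs]))

theorem trace_section_single_one_pos [DecidableEq (MaximalSpectrum A)]
    {s : (Π I : MaximalSpectrum A, A ⧸ I.asIdeal) → A} (hs : ∀ q, toPiQuotient ℝ (s q) = q)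
    (I : MaximalSpectrum A) :
    0 < Algebra.trace ℝ A (s (Pi.single I 1)) := by
  have : IsArtinianRing A := .of_finite ℝ A
  obtain ⟨ε, hε, hτε⟩ := exists_isIdempotentElem_eq_of_ker_isNilpotent
    (toPiQuotient ℝ (A := A)).toRingHom (fun a ha => isNilpotent_of_toPiQuotient_eq_zero ℝ ha)
    (Pi.single I 1) (toPiQuotient_surjective ℝ _)
    (by rw [IsIdempotentElem, ← Pi.single_mul, mul_one])
  have hε0 : ε ≠ 0 := by
    rintro rfl
    exact Pi.single_ne_zero_iff.mpr (one_ne_zero (α := A ⧸ I.asIdeal)) (by simpa using hτε.symm)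
  rw [← hτε, AlgHom.toRingHom_eq_coe, RingHom.coe_coe, trace_section_toPiQuotient hs]
  exact Algebra.trace_pos_of_isIdempotentElem hε hε0

theorem sum_sign_hermiteForm_trace_eq_sum_sign_algHom [Fintype (A →ₐ[ℝ] ℝ)] (h : A) {κ : Type*}
    [Fintype κ] (v : Basis κ ℝ A) (hv : (hermiteForm (Algebra.trace ℝ A) h).IsOrthoᵢ v) :
    ∑ k, (sign (hermiteForm (Algebra.trace ℝ A) h (v k) (v k)) : ℤ) =
      ∑ φ : A →ₐ[ℝ] ℝ, (sign (φ h) : ℤ) := by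
  classical
  have : IsArtinianRing A := .of_finite ℝ A
  have : Fintype (MaximalSpectrum A) := .ofFinite _
  set τ := toPiQuotient ℝ (A := A)
  obtain ⟨s, hs⟩ := τ.toLinearMap.exists_rightInverse_of_surjective
    (LinearMap.range_eq_top.mpr (toPiQuotient_surjective ℝ))
  have hτs : ∀ q, τ (s q) = q := LinearMap.congr_fun hs
  set t := Algebra.trace ℝ A ∘ₗ s
  have hB : ∀ a b, hermiteForm t (τ h) (τ a) (τ b) = hermiteForm (Algebra.trace ℝ A) h a b :=
    fun a b => by
      rw [hermiteForm_apply, hermiteForm_apply, ← map_mul, ← map_mul]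
      exact trace_section_toPiQuotient hτs _
  choose n w hw hsum using fun I => hasHermiteSignatureBasis_of_finiteDimensional
    (t := t ∘ₗ LinearMap.single ℝ _ I) (trace_section_single_one_pos hτs I) (τ h I)
  calc ∑ k, (sign (hermiteForm (Algebra.trace ℝ A) h (v k) (v k)) : ℤ)
      = ∑ x, (sign (hermiteForm t (τ h) (Pi.basis w x) (Pi.basis w x)) : ℤ) :=
        LinearMap.BilinForm.sum_sign_eq_of_isOrthoᵢ τ.toLinearMap s (fun a => hB a a)
          (fun q => by simpa [hτs] using (hB (s q) (s q)).symm) v hv (Pi.basis w)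
          (isOrthoᵢ_hermiteForm_piBasis t _ w hw)
    _ = ∑ I, ∑ k, (sign (hermiteForm (t ∘ₗ LinearMap.single ℝ _ I) (τ h I) (w I k) (w I k)) : ℤ) :=
        by simp only [Fintype.sum_sigma, Pi.basis_apply, hermiteForm_single_single]
    _ = ∑ I, ∑ ψ : A ⧸ I.asIdeal →ₐ[ℝ] ℝ, (sign (ψ (τ h I)) : ℤ) := sum_congr rfl fun I _ => hsum I
    _ = ∑ x : Σ I : MaximalSpectrum A, (A ⧸ I.asIdeal →ₐ[ℝ] ℝ), (sign (x.2 (τ h x.1)) : ℤ) :=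
        (Fintype.sum_sigma fun x : Σ I : MaximalSpectrum A, (A ⧸ I.asIdeal →ₐ[ℝ] ℝ) =>
          (sign (x.2 (τ h x.1)) : ℤ)).symm
    _ = ∑ φ : A →ₐ[ℝ] ℝ, (sign (φ h) : ℤ) :=
        Fintype.sum_equiv (sigmaAlgHomEquiv ℝ) _ _ fun _ => rfl

theorem card_pos_sub_card_neg_eigenvalues_hermiteForm_trace (h : A) {ι : Type*} [Fintype ι]
    [DecidableEq ι] (b : Basis ι ℝ A)
    (hM : (LinearMap.BilinForm.toMatrix b (hermiteForm (Algebra.trace ℝ A) h)).IsHermitian) :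
    (#{i | 0 < hM.eigenvalues i} : ℤ) - #{i | hM.eigenvalues i < 0} =
      (Nat.card {φ : A →ₐ[ℝ] ℝ // 0 < φ h} : ℤ) - Nat.card {φ : A →ₐ[ℝ] ℝ // φ h < 0} := by
  have : Fintype (A →ₐ[ℝ] ℝ) := .ofFinite _
  obtain ⟨u, hu, hdiag⟩ := hM.exists_basis_isOrthoᵢ_eigenvalues
  simp only [Nat.card_eq_fintype_card, Fintype.card_subtype, ← sum_sign_eq_card_pos_sub_card_neg]
  simpa only [hdiag] using sum_sign_hermiteForm_trace_eq_sum_sign_algHom h u hu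

end Assembly

/-- **Multivariate Hermite quadratic form, signature part (over ℝ).**
Let `A` be a finite-dimensional commutative `ℝ`-algebra, `h ∈ A`, and `b` a basis of `A`.
The Gram matrix `M` of the Hermite form `H_h (f,g) = tr (L_{f h g})` with respect to `b`
is symmetric (Hermitian over `ℝ`), and its signature—the number of positive eigenvalues
minus the number of negative eigenvalues, counted with multiplicity—equals
`#{φ : A →ₐ[ℝ] ℝ | φ h > 0} − #{φ : A →ₐ[ℝ] ℝ | φ h < 0}`.
In particular, for `h = 1` the signature of the trace form equals the number of
`ℝ`-algebra homomorphisms `A → ℝ`. -/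
theorem hermite_signature_eq_real_point_count
    (A : Type*) [CommRing A] [Algebra ℝ A] [FiniteDimensional ℝ A] (h : A)
    (ι : Type*) [Fintype ι] [DecidableEq ι] (b : Module.Basis ι ℝ A) :
    (BilinForm.toMatrix b
        ((Algebra.traceForm ℝ A).compl₂ (LinearMap.mulLeft ℝ h))).IsHermitian ∧
    (∀ hM : (BilinForm.toMatrix b
        ((Algebra.traceForm ℝ A).compl₂ (LinearMap.mulLeft ℝ h))).IsHermitian,
      ((Finset.univ.filter fun i => 0 < hM.eigenvalues i).card : ℤ) -
          ((Finset.univ.filter fun i => hM.eigenvalues i < 0).card : ℤ) =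
        (Nat.card {φ : A →ₐ[ℝ] ℝ // 0 < φ h} : ℤ) -
          (Nat.card {φ : A →ₐ[ℝ] ℝ // φ h < 0} : ℤ)) ∧
    (∀ hM₁ : (BilinForm.toMatrix b (Algebra.traceForm ℝ A)).IsHermitian,
      ((Finset.univ.filter fun i => 0 < hM₁.eigenvalues i).card : ℤ) -
          ((Finset.univ.filter fun i => hM₁.eigenvalues i < 0).card : ℤ) =
        (Nat.card (A →ₐ[ℝ] ℝ) : ℤ)) := by
  refine ⟨Matrix.isHermitian_iff_isSymm.mpr ((LinearMap.BilinForm.isSymm_toMatrix_iff_isSymm b).mpr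
    (isSymm_hermiteForm _ h)), card_pos_sub_card_neg_eigenvalues_hermiteForm_trace h b, ?_⟩
  rw [show Algebra.traceForm ℝ A = hermiteForm (Algebra.trace ℝ A) 1 by ext; simp]
  intro hM₁
  refine (card_pos_sub_card_neg_eigenvalues_hermiteForm_trace 1 b hM₁).trans ?_
  simp [not_lt.mpr (zero_le_one' ℝ)]
end

section
/- Let k be a field of characteristic 0, let S and S' be commutative k-algebras of finite type, and let S → S' be a k-algebra homomorphism. Let p be a prime ideal of S and let κ(p) denote its residue field, i.e. the fraction field of S/p. Assume the fiber algebra F = κ(p) ⊗_S S' is finite-dimensional over κ(p). Then the rank of the κ(p)-bilinear trace form on F, (f,g) ↦ tr(L_{fg}), equals the number of prime ideals of K ⊗_{κ(p)} F, where K is an algebraic closure of κ(p) (i.e. the cardinality of the geometric fiber of Spec S' → Spec S over p). Moreover, for any h ∈ S' with image h̄ in F, the rank of the κ(p)-bilinear form (f,g) ↦ tr(L_{f h̄ g}) on F equals the number of prime ideals of the localization of K ⊗_{κ(p)} F away from the image of h. -/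
open scoped TensorProduct
open Module

/-!
The rank of a bilinear form is unchanged by extending scalars from `κ` to `K`, and the trace
form commutes with base change, so it suffices to work over the algebraically closed field `K`.
There a finite-dimensional algebra `A` maps onto `K ^ Spec A` by evaluation at its finitely many
points, with nilpotent kernel. The trace kills nilpotents and, in characteristic zero, is nonzero
on every nonzero idempotent; lifting the standard idempotents of `K ^ Spec A` shows that
`(x, y) ↦ tr (x a y)` is the pull-back of a diagonal form whose nonzero entries sit exactly at the
points where `a` does not vanish.
-/

theorem PrimeSpectrum.card_localizationAway {A : Type*} [CommRing A] (a : A) :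
    Nat.card (PrimeSpectrum (Localization.Away a)) =
      Nat.card {p : PrimeSpectrum A // a ∉ p.asIdeal} :=
  Nat.card_congr <|
    (Equiv.ofInjective _ (localization_comap_injective _ (Submonoid.powers a))).trans <|
      Equiv.setCongr (localization_away_comap_range (Localization.Away a) a)

namespace LinearMap

variable {R M N : Type*} [Field R] [AddCommGroup M] [Module R M] [AddCommGroup N] [Module R N]

theorem finrank_range_compl₁₂_of_surjective (B : N →ₗ[R] N →ₗ[R] R) {g : M →ₗ[R] N}
    (hg : Function.Surjective g) :
    finrank R (range (B.compl₁₂ g g)) = finrank R (range B) := by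
  have hB : B.compl₁₂ g g = g.dualMap ∘ₗ B ∘ₗ g := rfl
  rw [hB, range_comp, range_comp, range_eq_top.2 hg, Submodule.map_top]
  exact (Submodule.equivMapOfInjective _ (dualMap_injective_of_surjective hg) _).finrank_eq.symm

theorem finrank_range_baseChange_s3 (K : Type*) [Field K] [Algebra R K] (f : M →ₗ[R] N) :
    finrank K (range (f.baseChange K)) = finrank R (range f) := by
  have hsurj : Function.Surjective (f.rangeRestrict.baseChange K) :=
    lTensor_surjective _ f.surjective_rangeRestrict
  have hinj : Function.Injective ((range f).subtype.baseChange K) :=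
    Module.Flat.lTensor_preserves_injective_linearMap _ (Submodule.injective_subtype _)
  have hf : (range f).subtype ∘ₗ f.rangeRestrict = f := rfl
  conv_lhs => rw [← hf]
  rw [baseChange_comp, range_comp_of_range_eq_top _ (range_eq_top.2 hsurj),
    finrank_range_of_inj hinj, finrank_baseChange]

theorem BilinForm.finrank_range_baseChange_s3 {V : Type*} (K : Type*) [Field K] [Algebra R K]
    [AddCommGroup V] [Module R V] [FiniteDimensional R V] (B : LinearMap.BilinForm R V) :
    finrank K (range (B.baseChange K)) = finrank R (range B) := by
  let Φ := (TensorProduct.isBaseChange R V K).toDualBaseChange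
  have hB : B.baseChange K = Φ.toLinearMap ∘ₗ LinearMap.baseChange K B := by
    ext v w
    have h := (TensorProduct.isBaseChange R V K).toDualBaseChange_tmul 1 (B v) w
    simpa [Φ, Algebra.algebraMap_eq_smul_one] using h.symm
  rw [hB, range_comp, LinearEquiv.finrank_map_eq, LinearMap.finrank_range_baseChange_s3]

end LinearMap

theorem Matrix.finrank_range_toLinearMap₂' {R n : Type*} [Field R] [Fintype n] [DecidableEq n]
    (M : Matrix n n R) :
    finrank R (LinearMap.range
      (Matrix.toLinearMap₂' R M : (n → R) →ₗ[R] (n → R) →ₗ[R] R)) = M.rank := by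
  have h : (Matrix.toLinearMap₂' R M : (n → R) →ₗ[R] (n → R) →ₗ[R] R) =
      (LinearEquiv.piRing R R n R).symm.toLinearMap ∘ₗ M.transpose.mulVecLin := by
    ext i j
    simp [Matrix.toLinearMap₂'_apply', Matrix.mulVec, dotProduct, Pi.single_apply]
  rw [h, LinearMap.range_comp, LinearEquiv.finrank_map_eq, ← Matrix.rank_transpose]
  rfl

namespace Algebra

theorem trace_ne_zero_of_isIdempotentElem_s3 {K A : Type*} [Field K] [CharZero K] [CommRing A]
    [Algebra K A] [FiniteDimensional K A] {c : A} (hc : IsIdempotentElem c) (hc0 : c ≠ 0) :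
    trace K A c ≠ 0 := by
  rw [trace_apply, Ne, LinearMap.IsIdempotentElem.trace_eq_zero_iff (hc.map _)]
  exact fun h => hc0 (by simpa using LinearMap.congr_fun h 1)

variable {κ F : Type*} (K : Type*) [Field κ] [Field K] [Algebra κ K] [CommRing F] [Algebra κ F]
  [FiniteDimensional κ F]

theorem trace_one_tmul_s3 (w : F) :
    trace K (K ⊗[κ] F) (1 ⊗ₜ w) = algebraMap κ K (trace κ F w) := by
  rw [trace_apply, ← baseChange_lmul, LinearMap.trace_baseChange, trace_apply]

theorem traceForm_compl₂_mulLeft_baseChange (a : F) :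
    (traceForm K (K ⊗[κ] F)).compl₂ (LinearMap.mulLeft K (1 ⊗ₜ a)) =
      LinearMap.BilinForm.baseChange K ((traceForm κ F).compl₂ (LinearMap.mulLeft κ a)) := by
  ext v w
  simp [trace_one_tmul_s3, algebraMap_eq_smul_one]

end Algebra

namespace AlgHom

variable {K A ι : Type*} [Field K] [CommRing A] [Algebra K A] {ψ : A →ₐ[K] (ι → K)}

theorem exists_isIdempotentElem_apply_eq_single [DecidableEq ι] (hψ : Function.Surjective ψ)
    (hnil : ∀ x, ψ x = 0 → IsNilpotent x) (i : ι) :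
    ∃ c : A, IsIdempotentElem c ∧ ψ c = Pi.single i 1 := by
  obtain ⟨x, hx⟩ := hψ (Pi.single i 1)
  exact exists_isIdempotentElem_eq_of_ker_isNilpotent (ψ : A →+* (ι → K))
    (fun x hx => hnil x hx) _ ⟨x, hx⟩ (by simp [IsIdempotentElem, ← Pi.single_mul])

variable [CharZero K] [FiniteDimensional K A]

theorem exists_trace_eq_sum_apply_mul [Fintype ι] (hψ : Function.Surjective ψ)
    (hnil : ∀ x, ψ x = 0 → IsNilpotent x) :
    ∃ t : ι → K, (∀ i, t i ≠ 0) ∧ ∀ z, Algebra.trace K A z = ∑ i, ψ z i * t i := by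
  classical
  choose c hc hψc using exists_isIdempotentElem_apply_eq_single hψ hnil
  refine ⟨fun i => Algebra.trace K A (c i), fun i => ?_, fun z => ?_⟩
  · refine Algebra.trace_ne_zero_of_isIdempotentElem_s3 (hc i) fun h => ?_
    simpa [h] using congr_fun (hψc i) i
  · have hψz : ψ (∑ i, ψ z i • c i) = ψ z := by
      ext j
      simp [hψc, Pi.single_apply]
    have hz : IsNilpotent (z - ∑ i, ψ z i • c i) := hnil _ (by rw [map_sub, hψz, sub_self])
    have htr := (Algebra.isNilpotent_trace_of_isNilpotent (R := K) hz).eq_zero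
    rw [map_sub, sub_eq_zero, map_sum] at htr
    simp [htr, mul_comm]

theorem finrank_range_traceForm_compl₂_mulLeft [_root_.Finite ι] (hψ : Function.Surjective ψ)
    (hnil : ∀ x, ψ x = 0 → IsNilpotent x) (a : A) :
    finrank K (LinearMap.range ((Algebra.traceForm K A).compl₂ (LinearMap.mulLeft K a))) =
      Nat.card {i // ψ a i ≠ 0} := by
  classical
  have := Fintype.ofFinite ι
  obtain ⟨t, ht0, htr⟩ := exists_trace_eq_sum_apply_mul hψ hnil
  have hB : (Algebra.traceForm K A).compl₂ (LinearMap.mulLeft K a) =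
      (Matrix.toLinearMap₂' K (Matrix.diagonal (t * ψ a)) :
        (ι → K) →ₗ[K] (ι → K) →ₗ[K] K).compl₁₂ ψ.toLinearMap ψ.toLinearMap := by
    ext x y
    simp only [LinearMap.compl₂_apply, Algebra.traceForm_apply, LinearMap.mulLeft_apply, htr,
      map_mul, LinearMap.compl₁₂_apply, AlgHom.toLinearMap_apply, Matrix.toLinearMap₂'_apply',
      dotProduct, Matrix.mulVec_diagonal, Pi.mul_apply]
    exact Finset.sum_congr rfl fun i _ => by ring
  rw [hB, LinearMap.finrank_range_compl₁₂_of_surjective _ hψ,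
    Matrix.finrank_range_toLinearMap₂', Matrix.rank_diagonal, Nat.card_eq_fintype_card]
  simp [ht0]

end AlgHom

namespace IsAlgClosed

variable (K : Type*) {A : Type*} [Field K] [IsAlgClosed K] [CommRing A] [Algebra K A]
  [FiniteDimensional K A]

noncomputable def residueAlgEquiv (p : PrimeSpectrum A) : (A ⧸ p.asIdeal) ≃ₐ[K] K :=
  (AlgEquiv.ofBijective (Algebra.ofId K (A ⧸ p.asIdeal)) algebraMap_bijective_of_isIntegral).symm

noncomputable def evalPrime : A →ₐ[K] (PrimeSpectrum A → K) :=
  AlgHom.pi fun p => (residueAlgEquiv K p).toAlgHom.comp (Ideal.Quotient.mkₐ K p.asIdeal)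

variable {K}

theorem evalPrime_eq_zero_iff (x : A) (p : PrimeSpectrum A) :
    evalPrime K x p = 0 ↔ x ∈ p.asIdeal := by
  simp [evalPrime, Ideal.Quotient.eq_zero_iff_mem]

theorem isNilpotent_of_evalPrime_eq_zero {x : A} (hx : evalPrime K x = 0) : IsNilpotent x :=
  nilpotent_iff_mem_prime.2 fun J _ => (evalPrime_eq_zero_iff x ⟨J, ‹_›⟩).1 (congr_fun hx _)

theorem evalPrime_surjective : Function.Surjective (evalPrime K (A := A)) := by
  have := IsArtinianRing.of_finite K A
  intro v
  obtain ⟨x, hx⟩ := Ideal.pi_quotient_surjective (I := fun p : PrimeSpectrum A => p.asIdeal)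
    (fun p q hpq => Ideal.isCoprime_iff_sup_eq.2 (Ideal.IsMaximal.coprime_of_ne inferInstance
      inferInstance (PrimeSpectrum.ext_iff.not.1 hpq)))
    (fun p => (residueAlgEquiv K p).symm (v p))
  exact ⟨x, funext fun p => by simp [evalPrime, hx p]⟩

theorem finrank_range_traceForm_compl₂_mulLeft [CharZero K] (a : A) :
    finrank K (LinearMap.range ((Algebra.traceForm K A).compl₂ (LinearMap.mulLeft K a))) =
      Nat.card {p : PrimeSpectrum A // a ∉ p.asIdeal} := by
  have := IsArtinianRing.of_finite K A
  simp_rw [(evalPrime K).finrank_range_traceForm_compl₂_mulLeft evalPrime_surjective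
    (fun _ => isNilpotent_of_evalPrime_eq_zero) a, Ne, evalPrime_eq_zero_iff]

end IsAlgClosed

theorem Algebra.finrank_range_traceForm_compl₂_mulLeft_eq_card (κ K : Type*) {F : Type*}
    [Field κ] [Field K] [Algebra κ K] [IsAlgClosed K] [CharZero K] [CommRing F] [Algebra κ F]
    [FiniteDimensional κ F] (a : F) :
    finrank κ (LinearMap.range ((Algebra.traceForm κ F).compl₂ (LinearMap.mulLeft κ a))) =
      Nat.card {q : PrimeSpectrum (K ⊗[κ] F) // (1 : K) ⊗ₜ a ∉ q.asIdeal} := by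
  rw [← LinearMap.BilinForm.finrank_range_baseChange_s3 K,
    ← Algebra.traceForm_compl₂_mulLeft_baseChange]
  exact IsAlgClosed.finrank_range_traceForm_compl₂_mulLeft _

theorem relative_hermite_rank_eq_card_geometric_fiber_general
    (k S S' κ K : Type*) [Field k] [CharZero k]
    [CommRing S] [CommRing S'] [Algebra k S] [Algebra S S']
    [Field κ] [Algebra S κ]
    [Field K] [Algebra κ K] [IsAlgClosure κ K]
    [FiniteDimensional κ (κ ⊗[S] S')] :
    Module.finrank κ (LinearMap.range (Algebra.traceForm κ (κ ⊗[S] S'))) =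
        Nat.card (PrimeSpectrum (K ⊗[κ] (κ ⊗[S] S'))) ∧
      ∀ h : S',
        Module.finrank κ
            (LinearMap.range ((Algebra.traceForm κ (κ ⊗[S] S')).compl₂
              (LinearMap.mulLeft κ ((1 : κ) ⊗ₜ[S] h)))) =
          Nat.card (PrimeSpectrum (Localization.Away
            ((1 : K) ⊗ₜ[κ] ((1 : κ) ⊗ₜ[S] h)))) := by
  have : IsAlgClosed K := IsAlgClosure.isAlgClosed κ
  have : CharZero K := charZero_of_injective_ringHom
    ((algebraMap κ K).comp ((algebraMap S κ).comp (algebraMap k S))).injective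
  refine ⟨?_, fun h => ?_⟩
  · have h1 := Algebra.finrank_range_traceForm_compl₂_mulLeft_eq_card κ K (1 : κ ⊗[S] S')
    rw [LinearMap.mulLeft_one, LinearMap.compl₂_id] at h1
    rw [h1]
    exact Nat.card_congr (Equiv.subtypeUnivEquiv fun q => q.isPrime.one_notMem)
  · rw [PrimeSpectrum.card_localizationAway,
      Algebra.finrank_range_traceForm_compl₂_mulLeft_eq_card κ K]

/-- **Relative multivariate Hermite quadratic form.**
Let `k` be a field of characteristic 0, `S`, `S'` finite-type commutative `k`-algebras, and
`S → S'` a `k`-algebra homomorphism (encoded by `[Algebra S S'] [IsScalarTower k S S']`).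
Let `p` be a prime of `S`, `κ` its residue field (the fraction field of `S ⧸ p`), and `K` an
algebraic closure of `κ`.  If the fiber algebra `F = κ ⊗[S] S'` is finite-dimensional over
`κ`, then the rank of the trace form of `F` over `κ` equals the number of prime ideals of
`K ⊗[κ] F` (the cardinality of the geometric fiber over `p`); moreover, for every `h ∈ S'`,
the rank of `(f, g) ↦ tr (L_{f h̄ g})` on `F` (with `h̄ = 1 ⊗ h`) equals the number of prime
ideals of the localization of `K ⊗[κ] F` away from the image of `h`. -/
theorem relative_hermite_rank_eq_card_geometric_fiber
    (k S S' κ K : Type*) [Field k] [CharZero k]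
    [CommRing S] [CommRing S'] [Algebra k S] [Algebra k S']
    [Algebra.FiniteType k S] [Algebra.FiniteType k S']
    [Algebra S S'] [IsScalarTower k S S']
    (p : Ideal S) [p.IsPrime]
    [Field κ] [Algebra (S ⧸ p) κ] [IsFractionRing (S ⧸ p) κ]
    [Algebra S κ] [IsScalarTower S (S ⧸ p) κ]
    [Field K] [Algebra κ K] [IsAlgClosure κ K]
    [FiniteDimensional κ (κ ⊗[S] S')] :
    Module.finrank κ (LinearMap.range (Algebra.traceForm κ (κ ⊗[S] S'))) =
        Nat.card (PrimeSpectrum (K ⊗[κ] (κ ⊗[S] S'))) ∧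
      ∀ h : S',
        Module.finrank κ
            (LinearMap.range ((Algebra.traceForm κ (κ ⊗[S] S')).compl₂
              (LinearMap.mulLeft κ ((1 : κ) ⊗ₜ[S] h)))) =
          Nat.card (PrimeSpectrum (Localization.Away
            ((1 : K) ⊗ₜ[κ] ((1 : κ) ⊗ₜ[S] h)))) :=
  relative_hermite_rank_eq_card_geometric_fiber_general k S S' κ K
end

section
/- (Invariant rank implies invariant signature.) Let n be a natural number and let S be a connected subset of the space of n×n real matrices (with the Euclidean topology) such that every M ∈ S is symmetric and every M ∈ S has the same rank r. Then the number of positive eigenvalues of M (counted with multiplicity) is the same for all M ∈ S; consequently the signature of M, i.e. (number of positive eigenvalues) − (number of negative eigenvalues), counted with multiplicity, is constant on S. -/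
/-!
By Sylvester's law of inertia, the number of positive (negative) eigenvalues of a symmetric
matrix `A` is the largest dimension of a subspace on which the quadratic form `x ↦ xᵀ A x` is
positive (negative) definite. Definiteness on a fixed subspace is an open condition on `A`, so
both counts are lower semicontinuous in `A`. Their sum is the rank, which is constant on `S`, so
each count is locally constant on `S`, hence constant because `S` is connected.
-/

open Matrix QuadraticMap QuadraticForm Finset Filter Topology

namespace Matrix
variable {ι : Type*} [Fintype ι] [DecidableEq ι]

theorem toQuadraticForm'_apply {R : Type*} [CommRing R] (A : Matrix ι ι R) (x : ι → R) :
    A.toQuadraticForm' x = x ⬝ᵥ A *ᵥ x := by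
  simp [toQuadraticForm', toLinearMap₂'_apply']

theorem IsHermitian.toQuadraticForm'_comp_eigenvectorUnitary {A : Matrix ι ι ℝ}
    (hA : A.IsHermitian) :
    A.toQuadraticForm'.comp (UnitaryGroup.toLinearEquiv hA.eigenvectorUnitary).toLinearMap =
      weightedSumSquares ℝ hA.eigenvalues := by
  ext y
  set U : Matrix ι ι ℝ := (hA.eigenvectorUnitary : Matrix ι ι ℝ)
  have hD : Uᵀ * A * U = diagonal hA.eigenvalues := by
    simpa [Unitary.conjStarAlgAut_star_apply, star_eq_conjTranspose] using
      hA.conjStarAlgAut_star_eigenvectorUnitary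
  change A.toQuadraticForm' (U *ᵥ y) = _
  rw [toQuadraticForm'_apply, weightedSumSquares_apply, mulVec_mulVec, ← vecMul_transpose,
    dotProduct_mulVec, vecMul_vecMul, ← Matrix.mul_assoc, hD]
  simp only [dotProduct, vecMul_diagonal, smul_eq_mul]
  exact sum_congr rfl fun i _ => by ring

theorem IsHermitian.equivalent_weightedSumSquares_eigenvalues {A : Matrix ι ι ℝ}
    (hA : A.IsHermitian) : A.toQuadraticForm'.Equivalent (weightedSumSquares ℝ hA.eigenvalues) :=
  ⟨hA.toQuadraticForm'_comp_eigenvectorUnitary ▸ isometryEquivOfCompLinearEquiv _ _⟩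

theorem IsHermitian.sigPos_toQuadraticForm' {A : Matrix ι ι ℝ} (hA : A.IsHermitian) :
    sigPos A.toQuadraticForm' = #{i | 0 < hA.eigenvalues i} := by
  rw [sigPos_of_equiv_weightedSumSquares hA.equivalent_weightedSumSquares_eigenvalues,
    Set.ncard_eq_toFinset_card', Set.toFinset_ofPred]

theorem IsHermitian.sigNeg_toQuadraticForm' {A : Matrix ι ι ℝ} (hA : A.IsHermitian) :
    sigNeg A.toQuadraticForm' = #{i | hA.eigenvalues i < 0} := by
  rw [sigNeg_of_equiv_weightedSumSquares hA.equivalent_weightedSumSquares_eigenvalues,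
    Set.ncard_eq_toFinset_card', Set.toFinset_ofPred]

theorem IsHermitian.sigPos_add_sigNeg_toQuadraticForm' {A : Matrix ι ι ℝ} (hA : A.IsHermitian) :
    sigPos A.toQuadraticForm' + sigNeg A.toQuadraticForm' = A.rank := by
  rw [hA.sigPos_toQuadraticForm', hA.sigNeg_toQuadraticForm', hA.rank_eq_card_non_zero_eigs,
    Fintype.card_subtype, ← card_union_of_disjoint, ← filter_or]
  · simp only [ne_iff_lt_or_gt, or_comm]
  · exact disjoint_filter.2 fun i _ hpos hneg => hpos.not_gt hneg

theorem toQuadraticForm'_neg {R : Type*} [CommRing R] (A : Matrix ι ι R) :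
    (-A).toQuadraticForm' = -A.toQuadraticForm' := by
  ext x
  simp [toQuadraticForm'_apply, neg_mulVec]

theorem eventually_posDef_restrict_toQuadraticForm' {A : Matrix ι ι ℝ}
    {V : Submodule ℝ (ι → ℝ)} (hA : (A.toQuadraticForm'.restrict V).PosDef) :
    ∀ᶠ B in 𝓝 A, (B.toQuadraticForm'.restrict V).PosDef := by
  have hcont : Continuous fun p : Matrix ι ι ℝ × V => p.1.toQuadraticForm' p.2 := by
    simp only [toQuadraticForm'_apply]
    fun_prop
  have hsphere := (isCompact_sphere (0 : V) 1).eventually_forall_of_forall_eventually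
    (P := fun (B : Matrix ι ι ℝ) (v : V) => 0 < B.toQuadraticForm' v) fun v hv =>
      (isOpen_lt continuous_const hcont).eventually_mem
        (hA v (ne_zero_of_mem_unit_sphere ⟨v, hv⟩))
  filter_upwards [hsphere] with B hB v hv
  have hunit := hB (‖v‖⁻¹ • v) (by simp [norm_smul, hv])
  rw [Submodule.coe_smul, QuadraticMap.map_smul] at hunit
  exact pos_of_mul_pos_right hunit (by positivity)

theorem eventually_sigPos_toQuadraticForm'_le (A : Matrix ι ι ℝ) :
    ∀ᶠ B in 𝓝 A, sigPos A.toQuadraticForm' ≤ sigPos B.toQuadraticForm' := by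
  obtain ⟨V, hV, hA⟩ := exists_finrank_eq_sigPos_and_posDef A.toQuadraticForm'
  filter_upwards [eventually_posDef_restrict_toQuadraticForm' hA] with B hB
  exact hV ▸ le_sigPos_of_posDef _ hB

theorem eventually_sigNeg_toQuadraticForm'_le (A : Matrix ι ι ℝ) :
    ∀ᶠ B in 𝓝 A, sigNeg A.toQuadraticForm' ≤ sigNeg B.toQuadraticForm' := by
  simpa [toQuadraticForm'_neg] using
    (continuous_neg.tendsto A).eventually (eventually_sigPos_toQuadraticForm'_le (-A))

theorem continuousOn_sigPos_toQuadraticForm' {S : Set (Matrix ι ι ℝ)} {r : ℕ}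
    (hS : ∀ A ∈ S, sigPos A.toQuadraticForm' + sigNeg A.toQuadraticForm' = r) :
    ContinuousOn (fun A => sigPos A.toQuadraticForm') S := by
  intro A hA
  rw [ContinuousWithinAt, nhds_discrete, tendsto_pure]
  filter_upwards [nhdsWithin_le_nhds (eventually_sigPos_toQuadraticForm'_le A),
    nhdsWithin_le_nhds (eventually_sigNeg_toQuadraticForm'_le A), self_mem_nhdsWithin]
    with B hpos hneg hB
  have hsumA := hS A hA
  have hsumB := hS B hB
  omega

end Matrix

/-- **Invariant rank implies invariant signature.**
Let `S` be a connected set of `n × n` real matrices (Euclidean topology) consisting of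
symmetric matrices, all of the same rank `r`.  Then the number of positive eigenvalues
(with multiplicity) is the same for all matrices of `S`; consequently the signature
(number of positive minus number of negative eigenvalues, with multiplicity) is constant
on `S`. -/
theorem invariant_rank_implies_invariant_signature
    (n r : ℕ) (S : Set (Matrix (Fin n) (Fin n) ℝ)) (hconn : IsConnected S)
    (hsymm : ∀ M ∈ S, M.IsSymm) (hrank : ∀ M ∈ S, M.rank = r) :
    ∀ M ∈ S, ∀ M' ∈ S, ∀ (hM : M.IsHermitian) (hM' : M'.IsHermitian),
      (Finset.univ.filter fun i => 0 < hM.eigenvalues i).card =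
          (Finset.univ.filter fun i => 0 < hM'.eigenvalues i).card ∧
      ((Finset.univ.filter fun i => 0 < hM.eigenvalues i).card : ℤ) -
          ((Finset.univ.filter fun i => hM.eigenvalues i < 0).card : ℤ) =
        ((Finset.univ.filter fun i => 0 < hM'.eigenvalues i).card : ℤ) -
          ((Finset.univ.filter fun i => hM'.eigenvalues i < 0).card : ℤ) := by
  have hinertia : ∀ A ∈ S, sigPos A.toQuadraticForm' + sigNeg A.toQuadraticForm' = r :=
    fun A hA => (isHermitian_iff_isSymm.2 (hsymm A hA)).sigPos_add_sigNeg_toQuadraticForm'.trans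
      (hrank A hA)
  intro M hMS M' hM'S hM hM'
  have hconst : sigPos M.toQuadraticForm' = sigPos M'.toQuadraticForm' :=
    hconn.isPreconnected.constant (continuousOn_sigPos_toQuadraticForm' hinertia) hMS hM'S
  have hsum := hinertia M hMS
  have hsum' := hinertia M' hM'S
  simp only [hM.sigPos_toQuadraticForm', hM.sigNeg_toQuadraticForm', hM'.sigPos_toQuadraticForm',
    hM'.sigNeg_toQuadraticForm'] at hconst hsum hsum'
  omega
end

section
/- (Freeness implies geometric delineability.) Let n ∈ ℕ, P = MvPolynomial (Fin n) ℝ, and let f ∈ P[X] be monic in X of degree ≥ 1 and h ∈ P[X]. Let S ⊆ ℝ^n be connected in the Euclidean topology, and assume there is e' ∈ ℕ such that for every a ∈ S, the number of distinct z ∈ ℂ with f(a; z) = 0 and h(a; z) ≠ 0 equals e' (invariance of the cardinality of the geometric fiber of D(h)). Then there exist e ∈ ℕ and continuous functions ξ₁,…,ξ_e : S → ℝ with ξ₁(a) < ⋯ < ξ_e(a) for all a ∈ S, such that for every a ∈ S the set {z ∈ ℝ : f(a; z) = 0 and h(a; z) ≠ 0} is exactly {ξ₁(a),…,ξ_e(a)}.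 -/
/-!
On the connected set `S` the complex fibre `{z | f(a; z) = 0, h(a; z) ≠ 0}` has constant size.
Near `a₀` every point `w` of the fibre over `a₀` is continued by a point of the fibre over `a`
within `ε` (roots of monic polynomials of fixed degree persist, and `h` stays nonzero near
`(a₀, w)`); as the fibres have the same size and the points over `a₀` are `2ε`-separated, this
continuation is a bijection, and it is the only point of the fibre that close to `w`. Hence
real points are continued by real points (the fibre is invariant under conjugation) and
non-real ones by non-real ones, which yields an order-preserving matching of the real fibres
moving points by less than `ε`. So the number of real points is locally constant, hence
constant on `S`, and the `i`-th smallest real point depends continuously on `a`.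
-/

open Polynomial Filter Topology Set ComplexConjugate

noncomputable def evalAtPoint {n : ℕ} (f : Polynomial (MvPolynomial (Fin n) ℝ))
    (a : Fin n → ℝ) : Polynomial ℝ :=
  f.map (MvPolynomial.eval a)

theorem Polynomial.exists_mem_roots_norm_sub_lt_of_norm_eval_lt {K : Type*} [NormedField K]
    {p : K[X]} (hp : p.Monic) (hs : p.Splits) {z : K} {ε : ℝ} (hε : 0 ≤ ε)
    (h : ‖p.eval z‖ < ε ^ p.natDegree) : ∃ r ∈ p.roots, ‖z - r‖ < ε := by
  by_contra! hfar
  refine h.not_ge ?_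
  calc ε ^ p.natDegree = (p.roots.map fun _ => ε).prod := by
        simp [hs.natDegree_eq_card_roots]
    _ ≤ (p.roots.map fun r => ‖z - r‖).prod :=
        Multiset.prod_map_le_prod_map₀ _ _ (fun _ _ => hε) hfar
    _ = ‖p.eval z‖ := by
        rw [hs.eval_eq_prod_roots_of_monic hp]
        exact Multiset.prod_hom' _ (normHom : K →*₀ ℝ) (z - ·)

theorem Polynomial.eventually_exists_isRoot_dist_lt {X : Type*} [TopologicalSpace X]
    {F : X → ℂ[X]} {x₀ : X} {d : ℕ} {w : ℂ} {ε : ℝ} (hmonic : ∀ x, (F x).Monic)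
    (hdeg : ∀ x, (F x).natDegree = d) (hcont : ContinuousAt (fun x => (F x).eval w) x₀)
    (hw : (F x₀).IsRoot w) (hε : 0 < ε) :
    ∀ᶠ x in 𝓝 x₀, ∃ z, (F x).IsRoot z ∧ dist z w < ε := by
  have hsmall : ∀ᶠ x in 𝓝 x₀, ‖(F x).eval w‖ < ε ^ d := by
    refine hcont.norm.eventually (gt_mem_nhds ?_)
    show ‖(F x₀).eval w‖ < ε ^ d
    rw [hw.eq_zero, norm_zero]
    positivity
  filter_upwards [hsmall] with x hx
  obtain ⟨z, hz, hzw⟩ := exists_mem_roots_norm_sub_lt_of_norm_eval_lt (hmonic x)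
    (IsAlgClosed.splits _) hε.le (hdeg x ▸ hx)
  exact ⟨z, isRoot_of_mem_roots hz, by rwa [dist_comm, dist_eq_norm]⟩

theorem Filter.Eventually.eventually_forall_dist_lt_of_nhds_prod {X Y : Type*}
    [TopologicalSpace X] [PseudoMetricSpace Y] {P : X → Y → Prop} {x₀ : X} {y₀ : Y}
    (h : ∀ᶠ p in 𝓝 (x₀, y₀), P p.1 p.2) :
    ∀ᶠ r in 𝓝[>] 0, ∀ᶠ x in 𝓝 x₀, ∀ y, dist y y₀ < r → P x y := by
  rw [nhds_prod_eq, eventually_prod_iff] at h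
  obtain ⟨Px, hPx, Py, hPy, hP⟩ := h
  obtain ⟨r₀, hr₀, hball⟩ := Metric.eventually_nhds_iff.1 hPy
  filter_upwards [Ioc_mem_nhdsGT hr₀] with r hr
  filter_upwards [hPx] with x hx y hy
  exact hP hx (hball (hy.trans_le hr.2))

section Matching

variable {X : Type*} [PseudoMetricSpace X] {A B : Set X} {ε : ℝ}

theorem Set.exists_bijOn_dist_lt_of_ncard_le (hB : B.Finite) (hcard : B.ncard ≤ A.ncard)
    (hsep : A.Pairwise fun w w' => 2 * ε ≤ dist w w') (hnear : ∀ w ∈ A, ∃ z ∈ B, dist z w < ε) :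
    ∃ g : X → X, BijOn g A B ∧ ∀ w ∈ A, dist (g w) w < ε := by
  choose! g hgB hgε using hnear
  have hinj : InjOn g A := by
    intro w hw w' hw' hgw
    by_contra hne
    have hw_near := hgε w hw
    rw [hgw] at hw_near
    linarith [hsep hw hw' hne, hgε w' hw', dist_triangle_left w w' (g w')]
  refine ⟨g, ⟨hgB, hinj, ?_⟩, hgε⟩
  rw [← Set.eq_of_subset_of_ncard_le (image_subset_iff.2 hgB) (by rwa [hinj.ncard_image]) hB]
  exact surjOn_image g A

theorem Set.BijOn.eq_of_dist_lt {g : X → X} (hg : BijOn g A B)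
    (hgε : ∀ w ∈ A, dist (g w) w < ε) (hsep : A.Pairwise fun w w' => 2 * ε ≤ dist w w')
    {w z : X} (hw : w ∈ A) (hz : z ∈ B) (hzw : dist z w < ε) : z = g w := by
  obtain ⟨w', hw', rfl⟩ := hg.surjOn hz
  by_contra hne
  have := dist_triangle_left w' w (g w')
  linarith [hsep hw' hw fun h => hne (h ▸ rfl), hgε w' hw']

end Matching

theorem Set.Finite.eventually_pairwise_two_mul_le_dist {X : Type*} [MetricSpace X] {A : Set X}
    (hA : A.Finite) : ∀ᶠ ε in 𝓝 (0 : ℝ), A.Pairwise fun w w' => 2 * ε ≤ dist w w' := by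
  refine hA.eventually_all.2 fun w _ => hA.eventually_all.2 fun w' _ => ?_
  rcases eq_or_ne w w' with rfl | hne
  · exact Eventually.of_forall fun _ hne => (hne rfl).elim
  filter_upwards [eventually_le_nhds (half_pos (dist_pos.2 hne))] with ε hε _
  linarith

structure IsCloseOrderMatching (ε : ℝ) (σ : ℝ → ℝ) (s t : Set ℝ) : Prop where
  bijOn : BijOn σ s t
  strictMonoOn : StrictMonoOn σ s
  abs_sub_lt : ∀ x ∈ s, |σ x - x| < ε

theorem IsCloseOrderMatching.abs_orderEmbOfFin_sub_lt {ε : ℝ} {σ : ℝ → ℝ} {s t : Finset ℝ}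
    {e : ℕ} (hσ : IsCloseOrderMatching ε σ s t) (hs : s.card = e) (ht : t.card = e) (i : Fin e) :
    |t.orderEmbOfFin ht i - s.orderEmbOfFin hs i| < ε := by
  have hcomp : σ ∘ s.orderEmbOfFin hs = t.orderEmbOfFin ht :=
    Finset.orderEmbOfFin_unique ht (fun j => hσ.bijOn.mapsTo (s.orderEmbOfFin_mem hs j))
      fun j k hjk => hσ.strictMonoOn (s.orderEmbOfFin_mem hs j) (s.orderEmbOfFin_mem hs k)
        ((s.orderEmbOfFin hs).strictMono hjk)
  rw [← hcomp]
  exact hσ.abs_sub_lt _ (s.orderEmbOfFin_mem hs i)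

theorem isCloseOrderMatching_re_of_bijOn {A B : Set ℂ} {g : ℂ → ℂ} {ε : ℝ} (hg : BijOn g A B)
    (hgε : ∀ w ∈ A, dist (g w) w < ε) (hsep : A.Pairwise fun w w' => 2 * ε ≤ dist w w')
    (him : ∀ w ∈ A, w.im ≠ 0 → ε ≤ |w.im|) (hconj : ∀ z ∈ B, conj z ∈ B) :
    IsCloseOrderMatching ε (fun x => (g x).re) ((↑) ⁻¹' A) ((↑) ⁻¹' B) := by
  -- `conj (g x)` is a point of `B` as close to `x` as `g x`, so it is `g x`.
  have hreal : ∀ x : ℝ, (x : ℂ) ∈ A → ((g x).re : ℂ) = g x := fun x hx =>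
    Complex.conj_eq_iff_re.1 <| hg.eq_of_dist_lt hgε hsep hx (hconj _ (hg.mapsTo hx)) <| by
      simpa only [Complex.conj_ofReal] using
        (Complex.dist_conj_conj (g x) x).trans_lt (hgε _ hx)
  have hclose : ∀ x : ℝ, (x : ℂ) ∈ A → |(g x).re - x| < ε := fun x hx => by
    rw [← Real.dist_eq, ← Complex.isometry_ofReal.dist_eq, hreal x hx]
    exact hgε _ hx
  have hmono : StrictMonoOn (fun x : ℝ => (g x).re) ((↑) ⁻¹' A) := by
    intro x hx y hy hxy
    have hsepxy : 2 * ε ≤ dist (x : ℂ) y := hsep hx hy (by exact_mod_cast hxy.ne)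
    rw [Complex.isometry_ofReal.dist_eq, Real.dist_eq, abs_of_neg (by linarith)] at hsepxy
    have := abs_lt.1 (hclose x hx)
    have := abs_lt.1 (hclose y hy)
    dsimp only
    linarith
  refine ⟨⟨fun x hx => ?_, hmono.injOn, fun y hy => ?_⟩, hmono, hclose⟩
  · simpa [mem_preimage, hreal x hx] using hg.mapsTo hx
  · obtain ⟨w, hw, hwy⟩ := hg.surjOn hy
    have hwim : w.im = 0 := by
      by_contra hne
      have hdist := hgε w hw
      rw [hwy, Complex.dist_eq] at hdist
      have : |w.im| ≤ ‖(y : ℂ) - w‖ := by simpa using Complex.abs_im_le_norm ((y : ℂ) - w)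
      linarith [him w hw hne]
    have hw' : ((w.re : ℝ) : ℂ) = w := Complex.ext rfl (by simp [hwim])
    exact ⟨w.re, by simpa [mem_preimage, hw'] using hw, by simp [hw', hwy]⟩

section SortedEnumeration

variable {X : Type*} [TopologicalSpace X] {R : X → Finset ℝ}

theorem card_eq_of_eventually_isCloseOrderMatching [PreconnectedSpace X]
    (hloc : ∀ x₀, ∀ᶠ ε in 𝓝[>] 0, ∀ᶠ x in 𝓝 x₀, ∃ σ, IsCloseOrderMatching ε σ (R x₀) (R x))
    (x y : X) : (R x).card = (R y).card := by
  refine IsLocallyConstant.apply_eq_of_preconnectedSpace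
    ((IsLocallyConstant.iff_eventually_eq fun x => (R x).card).2 fun x₀ => ?_) x y
  obtain ⟨ε, hε⟩ := (hloc x₀).exists
  filter_upwards [hε] with x ⟨σ, hσ⟩
  simpa only [ncard_coe_finset] using hσ.bijOn.ncard_eq.symm

theorem continuous_orderEmbOfFin_of_eventually_isCloseOrderMatching {e : ℕ}
    (hR : ∀ x, (R x).card = e)
    (hloc : ∀ x₀, ∀ᶠ ε in 𝓝[>] 0, ∀ᶠ x in 𝓝 x₀, ∃ σ, IsCloseOrderMatching ε σ (R x₀) (R x))
    (i : Fin e) : Continuous fun x => (R x).orderEmbOfFin (hR x) i := by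
  refine continuous_iff_continuousAt.2 fun x₀ => Metric.tendsto_nhds.2 fun δ hδ => ?_
  obtain ⟨ε, hε, hεδ⟩ := ((hloc x₀).and (Ioo_mem_nhdsGT hδ)).exists
  filter_upwards [hε] with x ⟨σ, hσ⟩
  rw [Real.dist_eq]
  exact (hσ.abs_orderEmbOfFin_sub_lt (hR x₀) (hR x) i).trans hεδ.2

end SortedEnumeration

def complexFiber (p q : ℝ[X]) : Set ℂ :=
  {z | (p.map (algebraMap ℝ ℂ)).IsRoot z ∧ ¬ (q.map (algebraMap ℝ ℂ)).IsRoot z}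

def realFiber (p q : ℝ[X]) : Set ℝ :=
  {x | p.IsRoot x ∧ ¬ q.IsRoot x}

section Fibers

variable {p q : ℝ[X]}

theorem complexFiber_finite (hp : p ≠ 0) : (complexFiber p q).Finite :=
  (finite_setOfPred_isRoot ((Polynomial.map_ne_zero_iff (algebraMap ℝ ℂ).injective).2 hp)).subset
    fun _ hz => hz.1

theorem realFiber_finite (hp : p ≠ 0) : (realFiber p q).Finite :=
  (finite_setOfPred_isRoot hp).subset fun _ hx => hx.1

theorem preimage_ofReal_complexFiber : ((↑) : ℝ → ℂ) ⁻¹' complexFiber p q = realFiber p q := by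
  ext x
  simp [complexFiber, realFiber, IsRoot, ← Complex.coe_algebraMap]

theorem conj_mem_complexFiber {z : ℂ} (hz : z ∈ complexFiber p q) : conj z ∈ complexFiber p q := by
  simpa [complexFiber, IsRoot, eval_map_algebraMap, aeval_conj] using hz

end Fibers

section Parametrized

variable {n : ℕ}

theorem monic_evalAtPoint {f : (MvPolynomial (Fin n) ℝ)[X]} (hf : f.Monic) (a : Fin n → ℝ) :
    (evalAtPoint f a).Monic :=
  hf.map _

theorem natDegree_evalAtPoint {f : (MvPolynomial (Fin n) ℝ)[X]} (hf : f.Monic) (a : Fin n → ℝ) :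
    (evalAtPoint f a).natDegree = f.natDegree :=
  hf.natDegree_map _

theorem continuous_eval_map_evalAtPoint (f : (MvPolynomial (Fin n) ℝ)[X]) :
    Continuous fun p : (Fin n → ℝ) × ℂ => ((evalAtPoint f p.1).map (algebraMap ℝ ℂ)).eval p.2 := by
  simp only [evalAtPoint, Polynomial.map_map, eval_map, eval₂_eq_sum, Polynomial.sum]
  exact continuous_finsetSum _ fun i _ => (Complex.continuous_ofReal.comp
    ((MvPolynomial.continuous_eval _).comp continuous_fst)).mul (continuous_snd.pow i)

theorem eventually_exists_mem_complexFiber_dist_lt {f : (MvPolynomial (Fin n) ℝ)[X]}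
    (h : (MvPolynomial (Fin n) ℝ)[X]) (hf : f.Monic) {a₀ : Fin n → ℝ} {w : ℂ}
    (hw : w ∈ complexFiber (evalAtPoint f a₀) (evalAtPoint h a₀)) :
    ∀ᶠ ε in 𝓝[>] 0, ∀ᶠ a in 𝓝 a₀,
      ∃ z ∈ complexFiber (evalAtPoint f a) (evalAtPoint h a), dist z w < ε := by
  have hh := Eventually.eventually_forall_dist_lt_of_nhds_prod
    (P := fun a z => ¬ ((evalAtPoint h a).map (algebraMap ℝ ℂ)).IsRoot z)
    ((continuous_eval_map_evalAtPoint h).continuousAt.eventually_ne hw.2)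
  filter_upwards [hh, self_mem_nhdsWithin]
    with ε hhε (hε : 0 < ε)
  have hmonic (a : Fin n → ℝ) : ((evalAtPoint f a).map (algebraMap ℝ ℂ)).Monic :=
    (monic_evalAtPoint hf a).map _
  have hdeg (a : Fin n → ℝ) :
      ((evalAtPoint f a).map (algebraMap ℝ ℂ)).natDegree = f.natDegree := by
    rw [(monic_evalAtPoint hf a).natDegree_map, natDegree_evalAtPoint hf]
  have hcont : ContinuousAt (fun a => ((evalAtPoint f a).map (algebraMap ℝ ℂ)).eval w) a₀ :=
    ((continuous_eval_map_evalAtPoint f).comp (continuous_id.prodMk continuous_const)).continuousAt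
  filter_upwards [hhε, eventually_exists_isRoot_dist_lt hmonic hdeg hcont hw.1 hε]
    with a hha ⟨z, hz, hzw⟩
  exact ⟨z, ⟨hz, hha z hzw⟩, hzw⟩

end Parametrized

theorem eventually_isCloseOrderMatching_realFiber {n e' : ℕ} {f : (MvPolynomial (Fin n) ℝ)[X]}
    (h : (MvPolynomial (Fin n) ℝ)[X]) (hf : f.Monic) {S : Set (Fin n → ℝ)}
    (hZ : ∀ a ∈ S, (complexFiber (evalAtPoint f a) (evalAtPoint h a)).ncard = e')
    {a₀ : Fin n → ℝ} (ha₀ : a₀ ∈ S) :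
    ∀ᶠ ε in 𝓝[>] 0, ∀ᶠ a in 𝓝 a₀, a ∈ S → ∃ σ, IsCloseOrderMatching ε σ
      (realFiber (evalAtPoint f a₀) (evalAtPoint h a₀))
      (realFiber (evalAtPoint f a) (evalAtPoint h a)) := by
  set A := complexFiber (evalAtPoint f a₀) (evalAtPoint h a₀)
  have hA : A.Finite := complexFiber_finite (monic_evalAtPoint hf _).ne_zero
  have him : ∀ᶠ ε in 𝓝 (0 : ℝ), ∀ w ∈ A, w.im ≠ 0 → ε ≤ |w.im| := by
    refine hA.eventually_all.2 fun w _ => ?_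
    rcases eq_or_ne w.im 0 with him | him
    · exact Eventually.of_forall fun _ hne => (hne him).elim
    filter_upwards [eventually_le_nhds (abs_pos.2 him)] with ε hε _ using hε
  have hnear := hA.eventually_all.2 fun w hw => eventually_exists_mem_complexFiber_dist_lt h hf hw
  filter_upwards [nhdsWithin_le_nhds hA.eventually_pairwise_two_mul_le_dist, nhdsWithin_le_nhds him, hnear]
    with ε hsepε himε hnearε
  filter_upwards [hA.eventually_all.2 hnearε] with a ha haS
  obtain ⟨g, hg, hgε⟩ :=
    exists_bijOn_dist_lt_of_ncard_le (complexFiber_finite (monic_evalAtPoint hf _).ne_zero)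
    (by rw [hZ a haS, hZ a₀ ha₀]) hsepε ha
  refine ⟨fun x => (g x).re, ?_⟩
  rw [← preimage_ofReal_complexFiber, ← preimage_ofReal_complexFiber]
  exact isCloseOrderMatching_re_of_bijOn hg hgε hsepε himε fun z hz => conj_mem_complexFiber hz

theorem freeness_implies_geometric_delineability_general
    (n : ℕ) (f h : Polynomial (MvPolynomial (Fin n) ℝ))
    (hf : f.Monic)
    (S : Set (Fin n → ℝ)) (hconn : IsConnected S) (e' : ℕ)
    (hgeo : ∀ a ∈ S,
      {z : ℂ | ((evalAtPoint f a).map (algebraMap ℝ ℂ)).IsRoot z ∧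
        ¬ ((evalAtPoint h a).map (algebraMap ℝ ℂ)).IsRoot z}.ncard = e') :
    ∃ (e : ℕ) (ξ : Fin e → S → ℝ),
      (∀ i, Continuous (ξ i)) ∧
      (∀ a : S, StrictMono fun i => ξ i a) ∧
      ∀ a : S,
        {x : ℝ | (evalAtPoint f a.val).IsRoot x ∧
            ¬ (evalAtPoint h a.val).IsRoot x} =
          Set.range fun i => ξ i a := by
  have hfin (a : S) : (realFiber (evalAtPoint f a) (evalAtPoint h a)).Finite :=
    realFiber_finite (monic_evalAtPoint hf _).ne_zero
  set R : S → Finset ℝ := fun a => (hfin a).toFinset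
  have hloc (a₀ : S) :
      ∀ᶠ ε in 𝓝[>] 0, ∀ᶠ a in 𝓝 a₀, ∃ σ, IsCloseOrderMatching ε σ (R a₀) (R a) := by
    filter_upwards [eventually_isCloseOrderMatching_realFiber h hf hgeo a₀.2] with ε hε
    filter_upwards [continuous_subtype_val.continuousAt.eventually hε] with a ha
    simpa [R] using ha a.2
  have : PreconnectedSpace S := Subtype.preconnectedSpace hconn.isPreconnected
  obtain ⟨a₀⟩ : Nonempty S := hconn.nonempty.to_subtype
  have hcard (a : S) : (R a).card = (R a₀).card :=
    card_eq_of_eventually_isCloseOrderMatching hloc a a₀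
  refine ⟨_, fun i a => (R a).orderEmbOfFin (hcard a) i,
    continuous_orderEmbOfFin_of_eventually_isCloseOrderMatching hcard hloc,
    fun a => ((R a).orderEmbOfFin (hcard a)).strictMono, fun a => ?_⟩
  rw [Finset.range_orderEmbOfFin, Finite.coe_toFinset]
  rfl

/-- **Freeness implies geometric delineability.**
Let `P = ℝ[x₁,…,xₙ]`, let `f ∈ P[X]` be monic in `X` of degree `≥ 1` (so that `P[X]/⟨f⟩` is
a free `P`-module of finite rank) and `h ∈ P[X]`.  Let `S ⊆ ℝⁿ` be connected, and suppose
the number of distinct `z ∈ ℂ` with `f(a; z) = 0` and `h(a; z) ≠ 0` is a constant `e'` for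
`a ∈ S`.  Then there are `e ∈ ℕ` and continuous functions `ξ₁ < ⋯ < ξ_e : S → ℝ` such that
for every `a ∈ S` the set `{x ∈ ℝ : f(a; x) = 0 ∧ h(a; x) ≠ 0}` is exactly
`{ξ₁(a),…,ξ_e(a)}`. -/
theorem freeness_implies_geometric_delineability
    (n : ℕ) (f h : Polynomial (MvPolynomial (Fin n) ℝ))
    (hf : f.Monic) (hdeg : 1 ≤ f.natDegree)
    (S : Set (Fin n → ℝ)) (hconn : IsConnected S) (e' : ℕ)
    (hgeo : ∀ a ∈ S,
      {z : ℂ | ((evalAtPoint f a).map (algebraMap ℝ ℂ)).IsRoot z ∧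
        ¬ ((evalAtPoint h a).map (algebraMap ℝ ℂ)).IsRoot z}.ncard = e') :
    ∃ (e : ℕ) (ξ : Fin e → S → ℝ),
      (∀ i, Continuous (ξ i)) ∧
      (∀ a : S, StrictMono fun i => ξ i a) ∧
      ∀ a : S,
        {x : ℝ | (evalAtPoint f a.val).IsRoot x ∧
            ¬ (evalAtPoint h a.val).IsRoot x} =
          Set.range fun i => ξ i a :=
  freeness_implies_geometric_delineability_general n f h hf S hconn e' hgeo
end

section
/- Let A be a commutative ring, J an ideal of the polynomial ring A[X], and B = A[X] ⧸ J, with s the image of X in B. Then: (a) B is generated by at most n elements as an A-module if and only if J contains a monic polynomial of degree at most n, and in that case B is generated by 1, s, …, s^{n−1}; in particular, B is a finitely generated A-module if and only if J contains a monic polynomial; (b) B is a finitely generated free A-module if and only if J can be generated by a single monic polynomial, and in that case B has an A-basis of the form 1, s, …, s^{n−1}. -/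
/-!
Write `s` for the image of `X`. If `J` contains a monic `p` of degree `d`, then `A[X] ⧸ J` is a
quotient of `A[X] ⧸ (p)`, which is free with basis `1, s, …, s^(d-1)`, so these powers span.
Conversely, if `A[X] ⧸ J` is spanned by `n` elements, Cayley–Hamilton for multiplication by `s`
makes the minimal polynomial `p` of `s` a monic element of `J` of degree `≤ n`. If moreover
`A[X] ⧸ J` is free of rank `r`, then `deg p ≤ r`, and the surjection `A[X] ⧸ (p) → A[X] ⧸ J`
from a free module of rank `≤ r` onto a free module of rank `r` is bijective (Orzech's
theorem); that is, `J = (p)`.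
-/

open Polynomial

namespace Ideal.Quotient

variable {A : Type*} [CommRing A] (J : Ideal A[X])

theorem aeval_mk_X (q : A[X]) : aeval (mk J X) q = mk J q := by
  simpa [aeval_X_left_apply] using aeval_algHom_apply (mkₐ A J) X q

theorem minpoly_mk_X_mem [Module.Finite A (A[X] ⧸ J)] : minpoly A (mk J X) ∈ J := by
  rw [← eq_zero_iff_mem, ← aeval_mk_X]
  exact minpoly.aeval A _

theorem minpoly_mk_X_monic [Module.Finite A (A[X] ⧸ J)] : (minpoly A (mk J X)).Monic :=
  minpoly.monic (Algebra.IsIntegral.isIntegral _)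

theorem exists_basis_mk_X_pow {p : A[X]} (hp : p.Monic) :
    ∃ b : Module.Basis (Fin p.natDegree) A (A[X] ⧸ span {p}), ∀ i, b i = mk _ X ^ (i : ℕ) :=
  ⟨(AdjoinRoot.powerBasis' hp).basis, (AdjoinRoot.powerBasis' hp).basis_eq_pow⟩

theorem span_range_mk_X_pow_eq_top {p : A[X]} (hp : p.Monic) (hpJ : p ∈ J) {n : ℕ}
    (hn : p.natDegree ≤ n) :
    Submodule.span A (Set.range fun i : Fin n => mk J X ^ (i : ℕ)) = ⊤ := by
  obtain ⟨b, hb⟩ := exists_basis_mk_X_pow hp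
  have hle : span {p} ≤ J := (span_singleton_le_iff_mem J).mpr hpJ
  let f := (factorₐ A hle).toLinearMap
  have hpow : Set.range (fun i : Fin p.natDegree => mk J X ^ (i : ℕ)) = f '' Set.range b := by
    rw [← Set.range_comp]
    congr 1
    funext i
    simp [f, hb]
  have htop : Submodule.span A (Set.range fun i : Fin p.natDegree => mk J X ^ (i : ℕ)) = ⊤ := by
    rw [hpow, Submodule.span_image, b.span_eq, Submodule.map_top,
      LinearMap.range_eq_top.mpr (factor_surjective hle)]
  refine eq_top_mono (Submodule.span_mono ?_) htop
  rintro _ ⟨i, rfl⟩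
  exact ⟨Fin.castLE hn i, rfl⟩

theorem finite_of_monic_mem {p : A[X]} (hp : p.Monic) (hpJ : p ∈ J) :
    Module.Finite A (A[X] ⧸ J) :=
  have : Module.Finite A (A[X] ⧸ span {p}) := hp.finite_adjoinRoot
  have hle : span {p} ≤ J := (span_singleton_le_iff_mem J).mpr hpJ
  Module.Finite.of_surjective (factorₐ A hle).toLinearMap (factor_surjective hle)

theorem exists_monic_mem_natDegree_le_of_span_eq_top {t : Finset (A[X] ⧸ J)}
    (ht : Submodule.span A (t : Set (A[X] ⧸ J)) = ⊤) :
    ∃ p ∈ J, p.Monic ∧ p.natDegree ≤ t.card := by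
  have : Module.Finite A (A[X] ⧸ J) := ⟨⟨t, ht⟩⟩
  refine ⟨_, minpoly_mk_X_mem J, minpoly_mk_X_monic J,
    (minpoly.natDegree_le_spanFinrank A _).trans ?_⟩
  rw [← ht, ← Set.ncard_coe_finset]
  exact Submodule.spanFinrank_span_le_ncard_of_finite t.finite_toSet

theorem eq_span_minpoly_mk_X [Module.Finite A (A[X] ⧸ J)] [Module.Free A (A[X] ⧸ J)] :
    J = span {minpoly A (mk J X)} := by
  nontriviality A
  set p := minpoly A (mk J X)
  have hp : p.Monic := minpoly_mk_X_monic J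
  have : Module.Finite A (A[X] ⧸ span {p}) := hp.finite_adjoinRoot
  have : Module.Free A (A[X] ⧸ span {p}) := hp.free_adjoinRoot
  have hle : span {p} ≤ J := (span_singleton_le_iff_mem J).mpr (minpoly_mk_X_mem J)
  let f := (factorₐ A hle).toLinearMap
  have hf : Function.Injective f :=
    (OrzechProperty.bijective_of_surjective_of_finrank_le f (factor_surjective hle)
      ((finrank_quotient_span_eq_natDegree' hp).trans_le (minpoly.natDegree_le _))).1
  refine le_antisymm (fun q hq => ?_) hle
  rw [← eq_zero_iff_mem]
  exact hf ((eq_zero_iff_mem.mpr hq).trans (map_zero f).symm)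

end Ideal.Quotient

/-- **Eisenbud, Prop. 4.1: finite and free quotients of `A[X]`.**
Let `A` be a commutative ring, `J` an ideal of `A[X]`, `B = A[X] ⧸ J` and `s` the image of
`X` in `B`.  Then:
(a) `B` is generated by `≤ n` elements as an `A`-module iff `J` contains a monic polynomial
of degree `≤ n`, in which case `B` is generated by `1, s, …, s^{n−1}`; in particular `B` is
a finitely generated `A`-module iff `J` contains a monic polynomial;
(b) `B` is a finitely generated free `A`-module iff `J` is generated by a single monic
polynomial, in which case `B` has an `A`-basis `1, s, …, s^{n−1}`. -/
theorem quotient_polynomial_finite_free_iff_monic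
    (A : Type*) [CommRing A] (J : Ideal (Polynomial A)) :
    (∀ n : ℕ,
      (∃ t : Finset (Polynomial A ⧸ J), t.card ≤ n ∧
          Submodule.span A (t : Set (Polynomial A ⧸ J)) = ⊤) ↔
        ∃ p ∈ J, p.Monic ∧ p.natDegree ≤ n) ∧
    (∀ n : ℕ, (∃ p ∈ J, p.Monic ∧ p.natDegree ≤ n) →
      Submodule.span A
          (Set.range fun i : Fin n => (Ideal.Quotient.mk J Polynomial.X) ^ (i : ℕ)) = ⊤) ∧
    (Module.Finite A (Polynomial A ⧸ J) ↔ ∃ p ∈ J, p.Monic) ∧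
    ((Module.Finite A (Polynomial A ⧸ J) ∧ Module.Free A (Polynomial A ⧸ J)) ↔
      ∃ p : Polynomial A, p.Monic ∧ J = Ideal.span {p}) ∧
    (∀ p : Polynomial A, p.Monic → J = Ideal.span {p} →
      ∃ b : Module.Basis (Fin p.natDegree) A (Polynomial A ⧸ J),
        ∀ i, b i = (Ideal.Quotient.mk J Polynomial.X) ^ (i : ℕ)) := by
  have hspan : ∀ n : ℕ, (∃ p ∈ J, p.Monic ∧ p.natDegree ≤ n) →
      Submodule.span A (Set.range fun i : Fin n => Ideal.Quotient.mk J X ^ (i : ℕ)) = ⊤ :=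
    fun n ⟨p, hpJ, hp, hpn⟩ => Ideal.Quotient.span_range_mk_X_pow_eq_top J hp hpJ hpn
  refine ⟨fun n => ⟨?_, fun h => ?_⟩, hspan, ⟨?_, ?_⟩, ⟨?_, ?_⟩, ?_⟩
  · rintro ⟨t, htn, ht⟩
    obtain ⟨p, hpJ, hp, hpt⟩ := Ideal.Quotient.exists_monic_mem_natDegree_le_of_span_eq_top J ht
    exact ⟨p, hpJ, hp, hpt.trans htn⟩
  · classical
    refine ⟨Finset.univ.image fun i : Fin n => Ideal.Quotient.mk J X ^ (i : ℕ),
      Finset.card_image_le.trans (by simp), ?_⟩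
    simpa using hspan n h
  · intro _
    exact ⟨_, Ideal.Quotient.minpoly_mk_X_mem J, Ideal.Quotient.minpoly_mk_X_monic J⟩
  · rintro ⟨p, hpJ, hp⟩
    exact Ideal.Quotient.finite_of_monic_mem J hp hpJ
  · rintro ⟨_, _⟩
    exact ⟨_, Ideal.Quotient.minpoly_mk_X_monic J, Ideal.Quotient.eq_span_minpoly_mk_X J⟩
  · rintro ⟨p, hp, rfl⟩
    obtain ⟨b, -⟩ := Ideal.Quotient.exists_basis_mk_X_pow hp
    exact ⟨.of_basis b, .of_basis b⟩
  · rintro p hp rfl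
    exact Ideal.Quotient.exists_basis_mk_X_pow hp
end

section
/- (Core of the geometric delineability of intersections.) Let n ∈ ℕ, P = MvPolynomial (Fin n) ℝ, let f, g ∈ P[X] be monic in X, and let h ∈ P[X]. Let S ⊆ ℝ^n be connected in the Euclidean topology. Assume: (i) for every a ∈ S, every z ∈ ℂ with g(a; z) = 0 satisfies f(a; z) = 0 (the solutions of g pointwise form a subset of the solutions of f); and (ii) the number of distinct z ∈ ℂ with f(a; z) = 0 and h(a; z) ≠ 0 is constant as a ranges over S. Then the number of distinct z ∈ ℂ with g(a; z) = 0 and h(a; z) ≠ 0 is also constant as a ranges over S. -/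
open Polynomial Metric Set Filter Topology

theorem Polynomial.exists_isRoot_dist_lt_of_norm_eval_lt {K : Type*} [NormedField K]
    {p : K[X]} (hsplit : p.Splits) (hp : p.Monic) {z : K} {ε : ℝ} (hε : 0 ≤ ε)
    (h : ‖p.eval z‖ < ε ^ p.natDegree) : ∃ r, p.IsRoot r ∧ dist z r < ε := by
  by_contra! hfar
  refine h.not_ge ?_
  calc ε ^ p.natDegree = (p.roots.map fun _ => ε).prod := by
        rw [Multiset.map_const', Multiset.prod_replicate, hsplit.natDegree_eq_card_roots]
    _ ≤ (p.roots.map fun r => ‖z - r‖).prod :=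
        Multiset.prod_map_le_prod_map₀ _ _ (fun _ _ => hε) fun r hr =>
          dist_eq_norm z r ▸ hfar r (isRoot_of_mem_roots hr)
    _ = ‖p.eval z‖ := by
        rw [hsplit.eval_eq_prod_roots_of_monic hp, ← normHom_apply, map_multiset_prod,
          Multiset.map_map]
        rfl

theorem Polynomial.continuous_eval_of_continuous_coeff {X R : Type*} [TopologicalSpace X]
    [Semiring R] [TopologicalSpace R] [IsTopologicalSemiring R] {P : X → R[X]} {D : ℕ}
    (hcoeff : ∀ i, Continuous fun x => (P x).coeff i) (hdeg : ∀ x, (P x).natDegree ≤ D) :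
    Continuous fun q : X × R => (P q.1).eval q.2 := by
  simp_rw [fun q : X × R => eval_eq_sum_range' (Nat.lt_succ_of_le (hdeg q.1)) q.2]
  exact continuous_finsetSum _ fun i _ =>
    ((hcoeff i).comp continuous_fst).mul (continuous_snd.pow i)

theorem Polynomial.eventually_forall_not_isRoot_of_isCompact {X R : Type*} [TopologicalSpace X]
    [Semiring R] [TopologicalSpace R] [T1Space R] {P : X → R[X]}
    (hP : Continuous fun q : X × R => (P q.1).eval q.2) {K : Set R} (hK : IsCompact K) {x₀ : X}
    (h : ∀ z ∈ K, ¬ (P x₀).IsRoot z) : ∀ᶠ x in 𝓝 x₀, ∀ z ∈ K, ¬ (P x).IsRoot z :=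
  hK.eventually_forall_of_forall_eventually fun z hz => hP.continuousAt.eventually_ne (h z hz)

def Polynomial.rootsAvoiding {R : Type*} [Semiring R] (p q : R[X]) : Set R :=
  {z | p.IsRoot z ∧ ¬ q.IsRoot z}

theorem Polynomial.mem_thickening_rootsAvoiding {R : Type*} [Semiring R] [PseudoMetricSpace R]
    {p q : R[X]} {z : R} {ε : ℝ} (hz : z ∈ thickening ε {w | p.IsRoot w})
    (hq : ∀ w ∈ closedBall z ε, ¬ q.IsRoot w) : z ∈ thickening ε (rootsAvoiding p q) := by
  obtain ⟨w, hw, hzw⟩ := mem_thickening_iff.1 hz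
  exact mem_thickening_iff.2 ⟨w, ⟨hw, hq w (mem_closedBall'.2 hzw.le)⟩, hzw⟩

theorem Set.Finite.eventually_pairwise_two_mul_le_dist_s11 {α : Type*} [MetricSpace α] {T : Set α}
    (hT : T.Finite) : ∀ᶠ ε in 𝓝 (0 : ℝ), T.Pairwise fun z z' => 2 * ε ≤ dist z z' := by
  refine hT.eventually_all.2 fun z _ => hT.eventually_all.2 fun z' _ => ?_
  rcases eq_or_ne z z' with rfl | hne
  · exact Eventually.of_forall fun _ h => absurd rfl h
  · filter_upwards [eventually_lt_nhds (half_pos (dist_pos.2 hne))] with ε hε _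
    linarith

theorem Set.Pairwise.eq_of_dist_lt {α : Type*} [PseudoMetricSpace α] {T : Set α} {ε : ℝ}
    (hT : T.Pairwise fun z z' => 2 * ε ≤ dist z z') {z z' w : α} (hz : z ∈ T) (hz' : z' ∈ T)
    (hzw : dist z w < ε) (hz'w : dist z' w < ε) : z = z' := by
  by_contra hne
  linarith [hT hz hz' hne, dist_triangle_right z z' w]

/-- Picking for each point of `A` a point of `B` within `ε` gives, by the separation of `T`, an
injection `A → B`, which is onto as `#A = #B`; it restricts to a bijection `A ∩ T' → B'`. -/
theorem Set.ncard_eq_of_subset_thickening {α : Type*} [PseudoMetricSpace α] {ε : ℝ}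
    {T T' A B B' : Set α} (hT : T.Pairwise fun z z' => 2 * ε ≤ dist z z') (hAT : A ⊆ T)
    (hT'T : T' ⊆ T) (hB : B.Finite) (hB'B : B' ⊆ B) (hcard : B.ncard = A.ncard)
    (hAB : A ⊆ thickening ε B) (hB'T' : B' ⊆ thickening ε T')
    (hAB' : A ∩ T' ⊆ thickening ε B') :
    B'.ncard = (A ∩ T').ncard := by
  choose ψ hψB hψ using fun z (hz : z ∈ A) => mem_thickening_iff.1 (hAB hz)
  have hinj : ∀ z z' hz hz', ψ z hz = ψ z' hz' → z = z' := fun z z' hz hz' he =>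
    hT.eq_of_dist_lt (hAT hz) (hAT hz') (hψ z hz) (he ▸ hψ z' hz')
  have hsurj := surj_on_of_inj_on_of_ncard_le ψ hψB hinj hcard.le hB
  refine (ncard_congr (fun z hz => ψ z hz.1) (fun z hz => ?_)
    (fun z z' hz hz' => hinj z z' hz.1 hz'.1) fun w hw => ?_).symm
  · obtain ⟨w, hwB', hzw⟩ := mem_thickening_iff.1 (hAB' hz)
    obtain ⟨z', hz', rfl⟩ := hsurj w (hB'B hwB')
    obtain rfl := hT.eq_of_dist_lt (hAT hz.1) (hAT hz') hzw (hψ z' hz')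
    exact hwB'
  · obtain ⟨z, hz, rfl⟩ := hsurj w (hB'B hw)
    obtain ⟨z', hz'T', hwz'⟩ := mem_thickening_iff.1 (hB'T' hw)
    obtain rfl := hT.eq_of_dist_lt (hAT hz) (hT'T hz'T') (hψ z hz) (dist_comm z' _ ▸ hwz')
    exact ⟨z, ⟨hz, hz'T'⟩, rfl⟩

structure IsContinuousMonicFamily {X R : Type*} [TopologicalSpace X] [Semiring R]
    [TopologicalSpace R] (P : X → R[X]) (d : ℕ) : Prop where
  monic : ∀ x, (P x).Monic
  natDegree_eq : ∀ x, (P x).natDegree = d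
  continuous_coeff : ∀ i, Continuous fun x => (P x).coeff i

namespace IsContinuousMonicFamily

variable {X : Type*} [TopologicalSpace X] {d : ℕ}

theorem eventually_cauchyBound_le {R : Type*} [NormedField R] {P : X → R[X]}
    (hP : IsContinuousMonicFamily P d) (x₀ : X) :
    ∀ᶠ x in 𝓝 x₀, cauchyBound (P x) ≤ cauchyBound (P x₀) + 1 := by
  have hcoeff : ∀ i ∈ Finset.range d, ∀ᶠ x in 𝓝 x₀, ‖(P x).coeff i‖₊ < ‖(P x₀).coeff i‖₊ + 1 :=
    fun i _ => (hP.continuous_coeff i).nnnorm.continuousAt.eventually_lt continuousAt_const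
      (lt_add_one _)
  filter_upwards [(Finset.eventually_all _).2 hcoeff] with x hx
  simp only [cauchyBound, (hP.monic _).leadingCoeff, nnnorm_one, div_one, hP.natDegree_eq]
  gcongr
  refine Finset.sup_le fun i hi => (hx i hi).le.trans ?_
  gcongr
  exact Finset.le_sup (f := fun i => ‖(P x₀).coeff i‖₊) hi

variable {P : X → ℂ[X]}

theorem continuous_eval (hP : IsContinuousMonicFamily P d) :
    Continuous fun q : X × ℂ => (P q.1).eval q.2 :=
  continuous_eval_of_continuous_coeff hP.continuous_coeff fun x => (hP.natDegree_eq x).le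

theorem exists_eventually_norm_le_of_isRoot (hP : IsContinuousMonicFamily P d) (x₀ : X) :
    ∃ M, ∀ᶠ x in 𝓝 x₀, ∀ z, (P x).IsRoot z → ‖z‖ ≤ M := by
  refine ⟨cauchyBound (P x₀) + 1, ?_⟩
  filter_upwards [hP.eventually_cauchyBound_le x₀] with x hx z hz
  exact_mod_cast ((hz.norm_lt_cauchyBound (hP.monic x).ne_zero).trans_le hx).le

theorem eventually_roots_base_subset_thickening (hP : IsContinuousMonicFamily P d) (x₀ : X)
    {ε : ℝ} (hε : 0 < ε) :
    ∀ᶠ x in 𝓝 x₀, {z | (P x₀).IsRoot z} ⊆ thickening ε {z | (P x).IsRoot z} := by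
  have hsmall : ∀ z₀ ∈ {z | (P x₀).IsRoot z}, ∀ᶠ x in 𝓝 x₀, ‖(P x).eval z₀‖ < ε ^ d :=
    fun z₀ hz₀ => (hP.continuous_eval.comp (continuous_id.prodMk continuous_const)).norm
      |>.continuousAt.eventually_lt continuousAt_const (by simpa [hz₀.eq_zero] using pow_pos hε d)
  filter_upwards [((finite_setOfPred_isRoot (hP.monic x₀).ne_zero).eventually_all).2 hsmall]
    with x hx z₀ hz₀
  rw [← hP.natDegree_eq x] at hx
  obtain ⟨r, hr, hdist⟩ := exists_isRoot_dist_lt_of_norm_eval_lt (IsAlgClosed.splits _)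
    (hP.monic x) hε.le (hx z₀ hz₀)
  exact mem_thickening_iff.2 ⟨r, hr, hdist⟩

theorem eventually_roots_subset_thickening_base (hP : IsContinuousMonicFamily P d) (x₀ : X)
    {ε : ℝ} (hε : 0 < ε) :
    ∀ᶠ x in 𝓝 x₀, {z | (P x).IsRoot z} ⊆ thickening ε {z | (P x₀).IsRoot z} := by
  obtain ⟨M, hM⟩ := hP.exists_eventually_norm_le_of_isRoot x₀
  have hK : IsCompact (closedBall 0 M \ thickening ε {z | (P x₀).IsRoot z}) :=
    (isCompact_closedBall 0 M).diff isOpen_thickening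
  filter_upwards [hM, eventually_forall_not_isRoot_of_isCompact hP.continuous_eval hK
    fun z hz hroot => hz.2 (self_subset_thickening hε _ hroot)] with x hMx hKx z hz
  by_contra hfar
  exact hKx z ⟨mem_closedBall_zero_iff.2 (hMx z hz), hfar⟩ hz

theorem eventually_ncard_rootsAvoiding_eq {F G H : X → ℂ[X]} {e : ℕ}
    (hF : IsContinuousMonicFamily F d) (hG : IsContinuousMonicFamily G e)
    (hH : Continuous fun q : X × ℂ => (H q.1).eval q.2) {S : Set X}
    (hsub : ∀ x ∈ S, ∀ z, (G x).IsRoot z → (F x).IsRoot z) {x₀ : X}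
    (hconst : ∀ x ∈ S, (rootsAvoiding (F x) (H x)).ncard = (rootsAvoiding (F x₀) (H x₀)).ncard)
    (hx₀ : x₀ ∈ S) :
    ∀ᶠ x in 𝓝[S] x₀,
      (rootsAvoiding (G x) (H x)).ncard = (rootsAvoiding (G x₀) (H x₀)).ncard := by
  set A := rootsAvoiding (F x₀) (H x₀)
  have hRF := finite_setOfPred_isRoot (hF.monic x₀).ne_zero
  have hA : A.Finite := hRF.subset fun z hz => hz.1
  have havoid : ∀ z ∈ A, ∀ᶠ ε in 𝓝 (0 : ℝ), closedBall z ε ⊆ {w | ¬ (H x₀).IsRoot w} :=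
    fun z hz => eventually_closedBall_subset ((H x₀).continuous.continuousAt.eventually_ne hz.2)
  have hsmall := hRF.eventually_pairwise_two_mul_le_dist_s11.and (hA.eventually_all.2 havoid)
  obtain ⟨ε, ⟨hsep, hball⟩, hε : 0 < ε⟩ :=
    ((hsmall.filter_mono nhdsWithin_le_nhds).and (self_mem_nhdsWithin (s := Ioi 0))).exists
  have hHx : ∀ᶠ x in 𝓝 x₀, ∀ z ∈ A, ∀ w ∈ closedBall z ε, ¬ (H x).IsRoot w :=
    hA.eventually_all.2 fun z hz =>
      eventually_forall_not_isRoot_of_isCompact hH (isCompact_closedBall z _) (hball z hz)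
  have hGA : rootsAvoiding (G x₀) (H x₀) = A ∩ {z | (G x₀).IsRoot z} :=
    Set.ext fun z =>
      ⟨fun hz => ⟨⟨hsub x₀ hx₀ z hz.1, hz.2⟩, hz.1⟩, fun hz => ⟨hz.2, hz.1.2⟩⟩
  rw [eventually_nhdsWithin_iff]
  filter_upwards [hF.eventually_roots_base_subset_thickening x₀ hε,
    hG.eventually_roots_base_subset_thickening x₀ hε,
    hG.eventually_roots_subset_thickening_base x₀ hε, hHx] with x hFx hGx hGx' hHx hxS
  rw [hGA]
  exact ncard_eq_of_subset_thickening (B := rootsAvoiding (F x) (H x)) hsep (fun z hz => hz.1)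
    (hsub x₀ hx₀) ((finite_setOfPred_isRoot (hF.monic x).ne_zero).subset fun z hz => hz.1)
    (fun z hz => ⟨hsub x hxS z hz.1, hz.2⟩) (hconst x hxS)
    (fun z hz => mem_thickening_rootsAvoiding (hFx hz.1) (hHx z hz))
    (fun z hz => hGx' hz.1)
    (fun z hz => mem_thickening_rootsAvoiding (hGx hz.2) (hHx z hz.1))

end IsContinuousMonicFamily

theorem IsPreconnected.constant_of_eventually_eq {X Y : Type*} [TopologicalSpace X]
    [TopologicalSpace Y] [DiscreteTopology Y] {S : Set X} (hS : IsPreconnected S) {f : X → Y}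
    (hf : ∀ x ∈ S, ∀ᶠ y in 𝓝[S] x, f y = f x) {x y : X} (hx : x ∈ S) (hy : y ∈ S) :
    f x = f y :=
  hS.constant (fun x hx => by rw [ContinuousWithinAt, nhds_discrete, tendsto_pure]; exact hf x hx)
    hx hy

theorem continuous_coeff_evalAtPoint_map {n : ℕ} (p : (MvPolynomial (Fin n) ℝ)[X]) (i : ℕ) :
    Continuous fun a => ((evalAtPoint p a).map (algebraMap ℝ ℂ)).coeff i := by
  simp only [evalAtPoint, coeff_map]
  exact (continuous_algebraMap ℝ ℂ).comp (MvPolynomial.continuous_eval _)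

theorem natDegree_evalAtPoint_map_le {n : ℕ} (p : (MvPolynomial (Fin n) ℝ)[X])
    (a : Fin n → ℝ) : ((evalAtPoint p a).map (algebraMap ℝ ℂ)).natDegree ≤ p.natDegree :=
  natDegree_map_le.trans natDegree_map_le

theorem isContinuousMonicFamily_evalAtPoint_map {n : ℕ} {p : (MvPolynomial (Fin n) ℝ)[X]}
    (hp : p.Monic) :
    IsContinuousMonicFamily (fun a => (evalAtPoint p a).map (algebraMap ℝ ℂ)) p.natDegree where
  monic a := (hp.map _).map _
  natDegree_eq a := by rw [evalAtPoint, (hp.map _).natDegree_map, hp.natDegree_map]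
  continuous_coeff := continuous_coeff_evalAtPoint_map p

/-- **Core of the geometric delineability of intersections.**
Let `P = ℝ[x₁,…,xₙ]`, `f, g ∈ P[X]` monic in `X`, `h ∈ P[X]`, and `S ⊆ ℝⁿ` connected.
If for every `a ∈ S` every complex solution of `g(a; ·) = 0` is a solution of
`f(a; ·) = 0`, and the number of distinct `z ∈ ℂ` with `f(a; z) = 0 ∧ h(a; z) ≠ 0` is
constant on `S`, then the number of distinct `z ∈ ℂ` with `g(a; z) = 0 ∧ h(a; z) ≠ 0` is
also constant on `S`. -/
theorem geometric_delineability_of_intersection_core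
    (n : ℕ) (f g h : Polynomial (MvPolynomial (Fin n) ℝ))
    (hf : f.Monic) (hg : g.Monic)
    (S : Set (Fin n → ℝ)) (hconn : IsConnected S)
    (hsub : ∀ a ∈ S, ∀ z : ℂ,
      ((evalAtPoint g a).map (algebraMap ℝ ℂ)).IsRoot z →
        ((evalAtPoint f a).map (algebraMap ℝ ℂ)).IsRoot z)
    (hconst : ∀ a ∈ S, ∀ a' ∈ S,
      {z : ℂ | ((evalAtPoint f a).map (algebraMap ℝ ℂ)).IsRoot z ∧
          ¬ ((evalAtPoint h a).map (algebraMap ℝ ℂ)).IsRoot z}.ncard =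
        {z : ℂ | ((evalAtPoint f a').map (algebraMap ℝ ℂ)).IsRoot z ∧
          ¬ ((evalAtPoint h a').map (algebraMap ℝ ℂ)).IsRoot z}.ncard) :
    ∀ a ∈ S, ∀ a' ∈ S,
      {z : ℂ | ((evalAtPoint g a).map (algebraMap ℝ ℂ)).IsRoot z ∧
          ¬ ((evalAtPoint h a).map (algebraMap ℝ ℂ)).IsRoot z}.ncard =
        {z : ℂ | ((evalAtPoint g a').map (algebraMap ℝ ℂ)).IsRoot z ∧
          ¬ ((evalAtPoint h a').map (algebraMap ℝ ℂ)).IsRoot z}.ncard := by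
  intro a ha a' ha'
  have hH := continuous_eval_of_continuous_coeff (continuous_coeff_evalAtPoint_map h)
    (natDegree_evalAtPoint_map_le h)
  have hlocal (a₀ : Fin n → ℝ) (ha₀ : a₀ ∈ S) :=
    (isContinuousMonicFamily_evalAtPoint_map hf).eventually_ncard_rootsAvoiding_eq
      (isContinuousMonicFamily_evalAtPoint_map hg) hH hsub (fun x hx => hconst x hx a₀ ha₀) ha₀
  exact hconn.isPreconnected.constant_of_eventually_eq hlocal ha ha'
end
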